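/- arXiv:2302.03400 — 6 statements merged into one kernel-verified Lean document; each statement's English description precedes it below -/
import Mathlib

section
/- Let (X,B,μ) be a standard non-atomic probability space, T an invertible ergodic measure-preserving transformation of X, and f ∈ L¹(μ) with ∫ f dμ = 0. Fix any strictly increasing sequence (L_m) of positive integers. Then there exists a subsequence (L_{m_n}) such that for every sequence of integers (v_n), the moving averages M(v_n, L_{m_n})^T f(x) = (1/L_{m_n}) Σ_{i=v_n+1}^{v_n+L_{m_n}} f(T^i x) converge to 0 for μ-almost every x ∈ X. -/
open MeasureTheory Filter

/-- Moving average `M(v,L)^T f (x) = (1/L) ∑_{i=v+1}^{v+L} f(T^i x)`. -/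
noncomputable def movAvg {X : Type*} (T : Equiv.Perm X) (f : X → ℝ) (v : ℤ) (L : ℕ)
    (x : X) : ℝ :=
  (L : ℝ)⁻¹ * ∑ i ∈ Finset.range L, f ((T ^ (v + 1 + (i : ℤ))) x)

/-!
Shifting the window by `v` composes the Birkhoff average `A_L f = (1/L) ∑_{i<L} f ∘ T^i` with the
measure-preserving map `T^(v+1)`, so `‖M(v,L) f‖₁ = ‖A_L f‖₁` whatever `v` is. For ergodic `T` and
`∫ f = 0` the mean ergodic theorem gives `‖A_L f‖₁ → 0`: in `L²` this is von Neumann's theorem, the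
fixed vectors of the Koopman operator being the constants, which are orthogonal to mean-zero
functions; it passes to `L¹` because `‖·‖₁ ≤ ‖·‖₂`, mean-zero `L²` functions are dense among
mean-zero `L¹` functions, and the set of `F ∈ L¹` whose averages tend to `0` is closed.
Choosing `m_n` with `‖A_{L_{m_n}} f‖₁ < 2⁻ⁿ` makes `∑ₙ ‖M(v_n, L_{m_n}) f‖₁` finite for every
`(v_n)`, so the terms tend to `0` almost everywhere.
-/

open scoped ENNReal Topology

namespace MeasureTheory

variable {α : Type*} [MeasurableSpace α] {μ : Measure α} {T : α → α}

theorem aestronglyMeasurable_birkhoffAverage {E : Type*} [NormedAddCommGroup E] [NormedSpace ℝ E]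
    (hT : Measure.QuasiMeasurePreserving T μ μ) {f : α → E} (hf : AEStronglyMeasurable f μ)
    (n : ℕ) : AEStronglyMeasurable (birkhoffAverage ℝ T f n) μ :=
  (Finset.aestronglyMeasurable_fun_sum _ fun k _ =>
    hf.comp_quasiMeasurePreserving (hT.iterate k)).const_smul _

theorem MeasurePreserving.perm_zpow {e : Equiv.Perm α} (he : MeasurePreserving e μ μ)
    (he' : Measurable e.symm) (k : ℤ) : MeasurePreserving ⇑(e ^ k) μ μ := by
  obtain ⟨k, rfl | rfl⟩ := k.eq_nat_or_neg
  · rw [zpow_natCast, ← Equiv.Perm.iterate_eq_pow]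
    exact he.iterate k
  · have he_symm : MeasurePreserving ⇑e⁻¹ μ μ := he.symm (⟨e, he.measurable, he'⟩ : α ≃ᵐ α)
    rw [zpow_neg, zpow_natCast, ← inv_pow, ← Equiv.Perm.iterate_eq_pow]
    exact he_symm.iterate k

namespace Lp

variable {E : Type*} [NormedAddCommGroup E] [NormedSpace ℝ E] {p : ℝ≥0∞}

theorem coeFn_birkhoffAverage_compMeasurePreserving (hT : MeasurePreserving T μ μ)
    (g : Lp E p μ) (n : ℕ) :
    ⇑(birkhoffAverage ℝ (compMeasurePreserving T hT) id n g) =ᵐ[μ] birkhoffAverage ℝ T g n := by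
  have hsum : ⇑(birkhoffSum (compMeasurePreserving T hT) id n g) =ᵐ[μ] birkhoffSum T g n := by
    simp only [birkhoffSum, id, compMeasurePreserving_iterate]
    filter_upwards
      [coeFn_finsetSum (Finset.range n) fun k => compMeasurePreserving _ (hT.iterate k) g,
      ae_all_iff.2 fun k => coeFn_compMeasurePreserving g (hT.iterate k)] with x hsum hk
    rw [hsum, Finset.sum_apply, birkhoffSum]
    exact Finset.sum_congr rfl fun k _ => hk k
  filter_upwards [coeFn_smul (n : ℝ)⁻¹ (birkhoffSum (compMeasurePreserving T hT) id n g), hsum]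
    with x hsmul hx
  simp [birkhoffAverage, hsmul, hx]

theorem tendsto_birkhoffAverage_compMeasurePreserving_zero_iff [Fact (1 ≤ p)]
    (hT : MeasurePreserving T μ μ) {G : Lp E p μ} {g : α → E} (hG : G =ᵐ[μ] g) :
    Tendsto (birkhoffAverage ℝ (compMeasurePreserving T hT) id · G) atTop (𝓝 0) ↔
      Tendsto (fun n => eLpNorm (birkhoffAverage ℝ T g n) p μ) atTop (𝓝 0) := by
  rw [tendsto_Lp_iff_tendsto_eLpNorm']
  refine tendsto_congr fun n => eLpNorm_congr_ae ?_
  filter_upwards [coeFn_birkhoffAverage_compMeasurePreserving hT G n,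
    hT.quasiMeasurePreserving.birkhoffAverage_ae_eq_of_ae_eq ℝ hG n, coeFn_zero E p μ]
    with x hG hg h0
  simp only [Pi.sub_apply, hG, hg, h0, Pi.zero_apply, sub_zero]

end Lp

end MeasureTheory

namespace MeasureTheory.L1

variable {α : Type*} [MeasurableSpace α] {μ : Measure α} [IsProbabilityMeasure μ]

theorem mem_closure_setOf_memLp_integral_eq_zero (p : ℝ≥0∞) {F : Lp ℝ 1 μ}
    (hF : ∫ x, F x ∂μ = 0) :
    F ∈ closure {G : Lp ℝ 1 μ | ∃ g, MemLp g p μ ∧ ∫ x, g x ∂μ = 0 ∧ G =ᵐ[μ] g} := by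
  -- Subtracting the mean is a continuous retraction onto the mean-zero functions, so it carries
  -- the dense set of simple functions onto a dense set of bounded mean-zero functions.
  set P : Lp ℝ 1 μ →L[ℝ] Lp ℝ 1 μ :=
    ContinuousLinearMap.id ℝ _ - (Lp.constL 1 μ ℝ).comp integralCLM
  have hP : ∀ G : Lp ℝ 1 μ, P G = G - Lp.const 1 μ (∫ x, G x ∂μ) := fun G => by
    simp [P, ← integral_eq, integral_eq_integral]
  have hPs : ∀ s : Lp.simpleFunc ℝ 1 μ, ∃ g, MemLp g p μ ∧ ∫ x, g x ∂μ = 0 ∧ P s =ᵐ[μ] g := by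
    intro s
    set c := ∫ x, (s : Lp ℝ 1 μ) x ∂μ
    have hs := Lp.simpleFunc.toSimpleFunc_eq_toFun s
    refine ⟨fun x => Lp.simpleFunc.toSimpleFunc s x - c,
      (SimpleFunc.memLp_of_isFiniteMeasure _ p μ).sub (memLp_const c), ?_, ?_⟩
    · rw [MeasureTheory.integral_sub (SimpleFunc.integrable_of_isFiniteMeasure _)
        (integrable_const c), integral_congr_ae hs]
      simp [c]
    · rw [hP]
      filter_upwards [Lp.coeFn_sub (s : Lp ℝ 1 μ) (Lp.const 1 μ c), Lp.coeFn_const 1 μ c, hs]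
        with x hsub hconst hsx
      rw [hsub, Pi.sub_apply, hconst, hsx, Function.const_apply]
  have hPF : P F = F := by rw [hP, hF, map_zero, sub_zero]
  rw [← hPF]
  refine closure_mono ?_ (image_closure_subset_closure_image P.continuous
    ⟨F, Lp.simpleFunc.dense ENNReal.one_ne_top F, rfl⟩)
  rintro _ ⟨G, hG, rfl⟩
  exact hPs ⟨G, hG⟩

end MeasureTheory.L1

namespace Ergodic

variable {α : Type*} [MeasurableSpace α] {μ : Measure α} {T : α → α}

theorem inner_eq_zero_of_compMeasurePreserving_eq (hT : Ergodic T μ) {u : Lp ℝ 2 μ}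
    (hu : Lp.compMeasurePreserving T hT.toMeasurePreserving u = u) {g : α → ℝ} (hg : MemLp g 2 μ)
    (hg0 : ∫ x, g x ∂μ = 0) : inner ℝ u (hg.toLp g) = 0 := by
  obtain ⟨c, hc⟩ := hT.ae_eq_const_of_ae_eq_comp_ae (Lp.aestronglyMeasurable u)
    ((Lp.coeFn_compMeasurePreserving u _).symm.trans (by rw [hu]))
  have hprod : (fun x => inner ℝ (u x) (hg.toLp g x)) =ᵐ[μ] fun x => c * g x := by
    filter_upwards [hc, hg.coeFn_toLp] with x hux hgx
    simp [hux, hgx, mul_comm]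
  rw [L2.inner_def, integral_congr_ae hprod, integral_const_mul, hg0, mul_zero]

theorem tendsto_eLpNorm_birkhoffAverage_two (hT : Ergodic T μ) {g : α → ℝ} (hg : MemLp g 2 μ)
    (hg0 : ∫ x, g x ∂μ = 0) :
    Tendsto (fun n => eLpNorm (birkhoffAverage ℝ T g n) 2 μ) atTop (𝓝 0) := by
  set U := (Lp.compMeasurePreservingₗᵢ ℝ T hT.toMeasurePreserving :
    Lp ℝ 2 μ →ₗᵢ[ℝ] Lp ℝ 2 μ).toContinuousLinearMap
  have hproj : (U.eqLocus (1 : Lp ℝ 2 μ →L[ℝ] Lp ℝ 2 μ)).orthogonalProjectionOnto (hg.toLp g) = 0 :=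
    Submodule.orthogonalProjectionOnto_apply_of_mem_orthogonal <|
      (Submodule.mem_orthogonal _ _).2 fun u hu =>
        hT.inner_eq_zero_of_compMeasurePreserving_eq hu hg hg0
  have hvN := U.tendsto_birkhoffAverage_orthogonalProjection
    (LinearIsometry.norm_toContinuousLinearMap_le _) (hg.toLp g)
  rw [hproj] at hvN
  exact (Lp.tendsto_birkhoffAverage_compMeasurePreserving_zero_iff _ hg.coeFn_toLp).1 hvN

theorem tendsto_eLpNorm_birkhoffAverage_one [IsProbabilityMeasure μ] (hT : Ergodic T μ)
    {f : α → ℝ} (hf : Integrable f μ) (hf0 : ∫ x, f x ∂μ = 0) :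
    Tendsto (fun n => eLpNorm (birkhoffAverage ℝ T f n) 1 μ) atTop (𝓝 0) := by
  have hTmp := hT.toMeasurePreserving
  set S : Set (Lp ℝ 1 μ) :=
    {F | Tendsto (birkhoffAverage ℝ (Lp.compMeasurePreserving T hTmp) id · F) atTop (𝓝 0)}
  have hS : IsClosed S := isClosed_setOfPred_tendsto_birkhoffAverage ℝ
    (Lp.isometry_compMeasurePreserving hTmp).lipschitz uniformContinuous_id continuous_const
  have hL2 : {G : Lp ℝ 1 μ | ∃ g, MemLp g 2 μ ∧ ∫ x, g x ∂μ = 0 ∧ G =ᵐ[μ] g} ⊆ S := by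
    rintro G ⟨g, hg, hg0, hGg⟩
    refine (Lp.tendsto_birkhoffAverage_compMeasurePreserving_zero_iff hTmp hGg).2 <|
      tendsto_of_tendsto_of_tendsto_of_le_of_le tendsto_const_nhds
        (hT.tendsto_eLpNorm_birkhoffAverage_two hg hg0) (fun _ => zero_le) fun n => ?_
    exact eLpNorm_le_eLpNorm_of_exponent_le one_le_two
      (aestronglyMeasurable_birkhoffAverage hTmp.quasiMeasurePreserving hg.1 n)
  have hF : hf.toL1 f ∈ S := closure_minimal hL2 hS <|
    L1.mem_closure_setOf_memLp_integral_eq_zero 2 <| by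
      rw [integral_congr_ae hf.coeFn_toL1, hf0]
  exact (Lp.tendsto_birkhoffAverage_compMeasurePreserving_zero_iff hTmp hf.coeFn_toL1).1 hF

end Ergodic

section movAvg

variable {X : Type*} (T : Equiv.Perm X) (f : X → ℝ) (v : ℤ) (L : ℕ)

theorem movAvg_eq_birkhoffAverage_comp :
    movAvg T f v L = birkhoffAverage ℝ T f L ∘ ⇑(T ^ (v + 1)) := by
  ext x
  simp only [movAvg, Function.comp_apply, birkhoffAverage, birkhoffSum, smul_eq_mul]
  congr 1
  refine Finset.sum_congr rfl fun i _ => ?_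
  rw [Equiv.Perm.iterate_eq_pow, ← Equiv.Perm.mul_apply, ← zpow_natCast, ← zpow_add, add_comm]

variable [MeasurableSpace X] {μ : Measure X} {T f}

theorem aestronglyMeasurable_movAvg (hT : MeasurePreserving T μ μ) (hT' : Measurable T.symm)
    (hf : AEStronglyMeasurable f μ) : AEStronglyMeasurable (movAvg T f v L) μ := by
  rw [movAvg_eq_birkhoffAverage_comp]
  exact (aestronglyMeasurable_birkhoffAverage hT.quasiMeasurePreserving hf L).comp_measurePreserving
    (hT.perm_zpow hT' _)

theorem eLpNorm_movAvg (hT : MeasurePreserving T μ μ) (hT' : Measurable T.symm)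
    (hf : AEStronglyMeasurable f μ) (p : ℝ≥0∞) :
    eLpNorm (movAvg T f v L) p μ = eLpNorm (birkhoffAverage ℝ T f L) p μ := by
  rw [movAvg_eq_birkhoffAverage_comp]
  exact eLpNorm_comp_measurePreserving
    (aestronglyMeasurable_birkhoffAverage hT.quasiMeasurePreserving hf L) (hT.perm_zpow hT' _)

end movAvg

theorem stmt0_general
    {X : Type*} [MeasurableSpace X]
    (μ : Measure X) [IsProbabilityMeasure μ]
    (T : Equiv.Perm X) (hT' : Measurable (⇑T.symm))
    (hTerg : Ergodic (⇑T) μ)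
    (f : X → ℝ) (hf : Integrable f μ) (hf0 : ∫ x, f x ∂μ = 0)
    (L : ℕ → ℕ) (hLmono : StrictMono L) :
    ∃ m : ℕ → ℕ, StrictMono m ∧
      ∀ v : ℕ → ℤ,
        ∀ᵐ x ∂μ, Tendsto (fun n => movAvg T f (v n) (L (m n)) x) atTop (nhds 0) := by
  have hT : MeasurePreserving T μ μ := hTerg.toMeasurePreserving
  have hmean : Tendsto (fun k => eLpNorm (birkhoffAverage ℝ T f (L k)) 1 μ) atTop (𝓝 0) :=
    (hTerg.tendsto_eLpNorm_birkhoffAverage_one hf hf0).comp hLmono.tendsto_atTop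
  obtain ⟨m, hm, hsmall⟩ : ∃ m : ℕ → ℕ, StrictMono m ∧
      ∀ n, eLpNorm (birkhoffAverage ℝ T f (L (m n))) 1 μ < 2⁻¹ ^ n :=
    extraction_forall_of_eventually fun n =>
      hmean.eventually_lt_const (ENNReal.pow_pos (by simp) n)
  refine ⟨m, hm, fun v => ?_⟩
  have hsum : ∑' n, eLpNorm (movAvg T f (v n) (L (m n))) 1 μ ≠ ∞ := by
    refine ne_top_of_le_ne_top (ENNReal.tsum_geometric_two ▸ ENNReal.ofNat_ne_top)
      (ENNReal.tsum_le_tsum fun n => ?_)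
    rw [eLpNorm_movAvg _ _ hT hT' hf.1]
    exact (hsmall n).le
  filter_upwards [summable_norm_of_tsum_eLpNorm_ne_top le_rfl
    (fun n => aestronglyMeasurable_movAvg _ _ hT hT' hf.1) hsum] with x hx
  exact tendsto_zero_iff_norm_tendsto_zero.2 hx.tendsto_atTop_zero

/-- Given a fixed strictly increasing sequence `(L_m)` of positive integers, a mean-zero
`f ∈ L¹(μ)` and an invertible ergodic measure-preserving `T` on a standard non-atomic
probability space, there is a subsequence `(L_{m_n})` along which all moving averages
`M(v_n, L_{m_n})^T f` converge to `0` almost everywhere, for every choice of `(v_n)`. -/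
theorem stmt0
    {X : Type*} [MeasurableSpace X] [StandardBorelSpace X]
    (μ : Measure X) [IsProbabilityMeasure μ] [NullSingletonClass μ]
    (T : Equiv.Perm X) (hT : Measurable (⇑T)) (hT' : Measurable (⇑T.symm))
    (hTerg : Ergodic (⇑T) μ)
    (f : X → ℝ) (hf : Integrable f μ) (hf0 : ∫ x, f x ∂μ = 0)
    (L : ℕ → ℕ) (hLpos : ∀ m, 0 < L m) (hLmono : StrictMono L) :
    ∃ m : ℕ → ℕ, StrictMono m ∧
      ∀ v : ℕ → ℤ,
        ∀ᵐ x ∂μ, Tendsto (fun n => movAvg T f (v n) (L (m n)) x) atTop (nhds 0) :=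
  stmt0_general μ T hT' hTerg f hf hf0 L hLmono
end

section
/- Let (X_k : k ≥ 0) be a sequence of independent, identically distributed real-valued random variables with E[X_0] = 0 and E[|X_0|^p] < ∞ for some 1 < p < 2. Let D > 0 satisfy D(p-1) > 1. Then for every sequence of nonnegative integers (v_n), the moving averages M(v_n, ⌊n^D⌋)X_0 = (1/⌊n^D⌋) Σ_{k=v_n+1}^{v_n+⌊n^D⌋} X_k converge to 0 almost surely. -/
open MeasureTheory Filter ProbabilityTheory Topology

/-!
Whatever the shifts `v n` are, a block of `L` consecutive terms satisfies the von Bahr–Esseen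
bound `E |X_{v+1} + ⋯ + X_{v+L}| ^ p ≤ 2 p L E |X_0| ^ p`, so by Markov's inequality
`P(|M(v, L) X_0| ≥ ε) ≤ 2 p E |X_0| ^ p ε ^ (-p) L ^ (1 - p)`. For `L = ⌊n ^ D⌋ ≈ n ^ D` these
bounds are summable because `D (p - 1) > 1`, and Borel–Cantelli gives almost sure convergence.
The moment bound follows by induction from the Taylor estimate
`|x + y| ^ p ≤ |x| ^ p + p sign(x) |x| ^ (p - 1) y + 2 p |y| ^ p`, whose linear term has mean
zero when `y` is centred and independent of `x`.
-/

lemma Real.abs_rpow_sub_rpow_le {q a b : ℝ} (ha : 0 ≤ a) (hb : 0 ≤ b) (hq0 : 0 ≤ q)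
    (hq1 : q ≤ 1) : |a ^ q - b ^ q| ≤ |a - b| ^ q := by
  wlog hba : b ≤ a generalizing a b
  · rw [abs_sub_comm, abs_sub_comm a]
    exact this hb ha (le_of_not_ge hba)
  have hmono : b ^ q ≤ a ^ q := Real.rpow_le_rpow hb hba hq0
  have hsubadd : a ^ q ≤ (a - b) ^ q + b ^ q := by
    simpa using Real.rpow_add_le_add_rpow (sub_nonneg.2 hba) hb hq0 hq1
  rw [abs_of_nonneg (sub_nonneg.2 hmono), abs_of_nonneg (sub_nonneg.2 hba)]
  linarith

lemma Real.rpow_le_one_add_rpow {x r p : ℝ} (hx : 0 ≤ x) (hr : 0 ≤ r) (hrp : r ≤ p) :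
    x ^ r ≤ 1 + x ^ p := by
  rcases le_total x 1 with h | h
  · linarith [Real.rpow_le_one hx h hr, Real.rpow_nonneg hx p]
  · linarith [Real.rpow_le_rpow_of_exponent_le h hrp]

/-- `signedRpow q t = sign t * |t| ^ q`, written so that `p * signedRpow (p - 1)` is literally the
derivative of `|·| ^ p` given by `hasDerivAt_abs_rpow`. -/
noncomputable def signedRpow (q t : ℝ) : ℝ := |t| ^ (q - 1) * t

section SignedRpow

variable {q : ℝ}

lemma signedRpow_of_nonneg (hq : q ≠ 0) {t : ℝ} (ht : 0 ≤ t) : signedRpow q t = t ^ q := by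
  rcases ht.eq_or_lt with rfl | ht
  · simp [signedRpow, Real.zero_rpow hq]
  · rw [signedRpow, abs_of_pos ht, ← Real.rpow_add_one ht.ne', sub_add_cancel]

lemma signedRpow_neg (t : ℝ) : signedRpow q (-t) = -signedRpow q t := by
  simp [signedRpow]

lemma abs_signedRpow (hq : q ≠ 0) (t : ℝ) : |signedRpow q t| = |t| ^ q := by
  rcases le_total 0 t with ht | ht
  · rw [signedRpow_of_nonneg hq ht, abs_of_nonneg ht, abs_of_nonneg (by positivity)]
  · rw [← abs_neg, ← signedRpow_neg, signedRpow_of_nonneg hq (neg_nonneg.2 ht), ← abs_neg t,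
      abs_of_nonneg (neg_nonneg.2 ht), abs_of_nonneg (Real.rpow_nonneg (neg_nonneg.2 ht) q)]

lemma measurable_signedRpow : Measurable (signedRpow q) := by
  unfold signedRpow; fun_prop

lemma abs_signedRpow_sub_le (hq0 : 0 < q) (hq1 : q ≤ 1) (a b : ℝ) :
    |signedRpow q a - signedRpow q b| ≤ 2 * |a - b| ^ q := by
  wlog ha : 0 ≤ a generalizing a b
  · have := this (-a) (-b) (by linarith)
    rwa [signedRpow_neg, signedRpow_neg, neg_sub_neg, abs_sub_comm, neg_sub_neg,
      abs_sub_comm b] at this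
  rcases le_total 0 b with hb | hb
  · rw [signedRpow_of_nonneg hq0.ne' ha, signedRpow_of_nonneg hq0.ne' hb]
    have := Real.abs_rpow_sub_rpow_le ha hb hq0.le hq1
    linarith [Real.rpow_nonneg (abs_nonneg (a - b)) q]
  · obtain ⟨c, rfl⟩ : ∃ c, b = -c := ⟨-b, (neg_neg b).symm⟩
    have hc : 0 ≤ c := by linarith
    rw [signedRpow_neg, signedRpow_of_nonneg hq0.ne' ha, signedRpow_of_nonneg hq0.ne' hc,
      sub_neg_eq_add, sub_neg_eq_add, abs_of_nonneg (by positivity),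
      abs_of_nonneg (by positivity)]
    have h1 : a ^ q ≤ (a + c) ^ q := Real.rpow_le_rpow ha (by linarith) hq0.le
    have h2 : c ^ q ≤ (a + c) ^ q := Real.rpow_le_rpow hc (by linarith) hq0.le
    linarith

end SignedRpow

lemma hasDerivAt_abs_rpow_signedRpow {p : ℝ} (hp : 1 < p) (t : ℝ) :
    HasDerivAt (fun t : ℝ ↦ |t| ^ p) (p * signedRpow (p - 1) t) t := by
  simpa [signedRpow, mul_assoc, sub_sub, one_add_one_eq_two] using hasDerivAt_abs_rpow t hp

/-- Mean value theorem for `t ↦ |t| ^ p - p * signedRpow (p - 1) x * t` on `[x, x + y]`, whose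
derivative is at most `2 p |y| ^ (p - 1)` there by `abs_signedRpow_sub_le`. -/
lemma abs_add_rpow_le {p : ℝ} (hp1 : 1 < p) (hp2 : p ≤ 2) (x y : ℝ) :
    |x + y| ^ p ≤ |x| ^ p + p * signedRpow (p - 1) x * y + 2 * p * |y| ^ p := by
  set h : ℝ → ℝ := fun t ↦ |t| ^ p - p * signedRpow (p - 1) x * t
  have hderiv : ∀ t ∈ Set.uIcc x (x + y),
      HasDerivWithinAt h (p * signedRpow (p - 1) t - p * signedRpow (p - 1) x)
        (Set.uIcc x (x + y)) t := fun t _ ↦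
    ((hasDerivAt_abs_rpow_signedRpow hp1 t).sub
      ((hasDerivAt_id t).const_mul _)).hasDerivWithinAt.congr_deriv (by simp)
  have hbound : ∀ t ∈ Set.uIcc x (x + y),
      ‖p * signedRpow (p - 1) t - p * signedRpow (p - 1) x‖ ≤ 2 * p * |y| ^ (p - 1) := by
    intro t ht
    have htx : |t - x| ≤ |y| := by simpa using Set.abs_sub_left_of_mem_uIcc ht
    have hHolder := abs_signedRpow_sub_le (q := p - 1) (by linarith) (by linarith) t x
    have hmono : |t - x| ^ (p - 1) ≤ |y| ^ (p - 1) :=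
      Real.rpow_le_rpow (abs_nonneg _) htx (by linarith)
    rw [Real.norm_eq_abs, ← mul_sub, abs_mul, abs_of_pos (by linarith)]
    nlinarith
  have hmvt := Convex.norm_image_sub_le_of_norm_hasDerivWithin_le hderiv hbound
    (convex_uIcc _ _) Set.left_mem_uIcc Set.right_mem_uIcc
  have hy : 2 * p * |y| ^ (p - 1) * ‖x + y - x‖ = 2 * p * |y| ^ p := by
    rcases eq_or_ne y 0 with rfl | hy
    · simp [Real.zero_rpow (by linarith : p ≠ 0)]
    · rw [add_sub_cancel_left, Real.norm_eq_abs, mul_assoc,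
        ← Real.rpow_add_one (abs_pos.2 hy).ne', sub_add_cancel]
  rw [hy, Real.norm_eq_abs] at hmvt
  have := (abs_le.1 hmvt).2
  simp only [h] at this
  linarith

section Moments

variable {Ω : Type*} [MeasurableSpace Ω] {μ : Measure Ω} {p : ℝ}

lemma MeasureTheory.MemLp.integrable_abs_rpow [IsFiniteMeasure μ] {f : Ω → ℝ}
    (hf : MemLp f (ENNReal.ofReal p) μ) (hp : 0 ≤ p) : Integrable (fun ω ↦ |f ω| ^ p) μ := by
  simpa [Real.norm_eq_abs, ENNReal.toReal_ofReal hp] using hf.integrable_norm_rpow'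

lemma MeasureTheory.MemLp.integrable_signedRpow_comp [IsFiniteMeasure μ] {f : Ω → ℝ}
    (hp : 1 < p) (hf : MemLp f (ENNReal.ofReal p) μ) :
    Integrable (fun ω ↦ signedRpow (p - 1) (f ω)) μ := by
  refine ((integrable_const 1).add (hf.integrable_abs_rpow (by linarith))).mono
    (measurable_signedRpow.comp_aemeasurable hf.aemeasurable).aestronglyMeasurable
    (Eventually.of_forall fun ω ↦ ?_)
  have hpos : 0 ≤ 1 + |f ω| ^ p := by positivity
  rw [Pi.add_apply, Real.norm_eq_abs, Real.norm_eq_abs, abs_signedRpow (by linarith),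
    abs_of_nonneg hpos]
  exact Real.rpow_le_one_add_rpow (abs_nonneg _) (by linarith) (by linarith)

lemma measure_le_abs_le_ofReal_integral_rpow_div [IsFiniteMeasure μ] {f : Ω → ℝ} {ε : ℝ}
    (hp : 0 < p) (hε : 0 < ε) (hf : Integrable (fun ω ↦ |f ω| ^ p) μ) :
    μ {ω | ε ≤ |f ω|} ≤ ENNReal.ofReal ((∫ ω, |f ω| ^ p ∂μ) / ε ^ p) := by
  have hsub : {ω | ε ≤ |f ω|} ⊆ {ω | ε ^ p ≤ |f ω| ^ p} := fun ω hω ↦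
    Real.rpow_le_rpow hε.le hω hp.le
  have hMarkov := mul_meas_ge_le_integral_of_nonneg
    (Eventually.of_forall fun ω ↦ Real.rpow_nonneg (abs_nonneg (f ω)) p) hf (ε ^ p)
  refine (measure_mono hsub).trans ?_
  rw [ENNReal.le_ofReal_iff_toReal_le (measure_ne_top _ _) (by positivity),
    le_div_iff₀ (by positivity), mul_comm]
  exact hMarkov

variable [IsProbabilityMeasure μ]

/-- Integrating `abs_add_rpow_le`: the first-order term vanishes by independence and
`μ[Y] = 0`. -/
lemma integral_abs_add_rpow_le {S Y : Ω → ℝ} (hp1 : 1 < p) (hp2 : p ≤ 2)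
    (hS : MemLp S (ENNReal.ofReal p) μ) (hY : MemLp Y (ENNReal.ofReal p) μ)
    (hSY : IndepFun S Y μ) (hY0 : μ[Y] = 0) :
    ∫ ω, |S ω + Y ω| ^ p ∂μ ≤ ∫ ω, |S ω| ^ p ∂μ + 2 * p * ∫ ω, |Y ω| ^ p ∂μ := by
  set G : Ω → ℝ := fun ω ↦ signedRpow (p - 1) (S ω)
  have hG : Integrable G μ := hS.integrable_signedRpow_comp hp1
  have hY1 : Integrable Y μ := hY.integrable (ENNReal.one_le_ofReal.2 hp1.le)
  have hGY : IndepFun G Y μ := hSY.comp measurable_signedRpow measurable_id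
  have hGY0 : ∫ ω, G ω * Y ω ∂μ = 0 := by
    rw [← Pi.mul_def, hGY.integral_mul_eq_mul_integral hG.aestronglyMeasurable
      hY1.aestronglyMeasurable, hY0, mul_zero]
  have hSp := hS.integrable_abs_rpow (by linarith)
  have hYp := hY.integrable_abs_rpow (by linarith)
  have hGYint : Integrable (fun ω ↦ p * G ω * Y ω) μ := by
    simpa only [Pi.mul_apply, mul_assoc] using (hGY.integrable_mul hG hY1).const_mul p
  calc ∫ ω, |S ω + Y ω| ^ p ∂μ
      ≤ ∫ ω, |S ω| ^ p + p * G ω * Y ω + 2 * p * |Y ω| ^ p ∂μ :=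
        integral_mono ((hS.add hY).integrable_abs_rpow (by linarith))
          ((hSp.add hGYint).add (hYp.const_mul _)) fun ω ↦ abs_add_rpow_le hp1 hp2 _ _
    _ = ∫ ω, |S ω| ^ p ∂μ + 2 * p * ∫ ω, |Y ω| ^ p ∂μ := by
        rw [integral_add (f := fun ω ↦ |S ω| ^ p + p * G ω * Y ω) (hSp.add hGYint)
          (hYp.const_mul _), integral_add hSp hGYint, integral_const_mul]
        simp only [mul_assoc, integral_const_mul, hGY0]
        ring

/-- The von Bahr–Esseen inequality, with constant `2 * p`. -/
lemma integral_abs_sum_rpow_le {ι : Type*} {X : ι → Ω → ℝ} (hp1 : 1 < p) (hp2 : p ≤ 2)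
    (hindep : iIndepFun X μ) (hLp : ∀ i, MemLp (X i) (ENNReal.ofReal p) μ)
    (hmean : ∀ i, μ[X i] = 0) (s : Finset ι) :
    ∫ ω, |∑ i ∈ s, X i ω| ^ p ∂μ ≤ 2 * p * ∑ i ∈ s, ∫ ω, |X i ω| ^ p ∂μ := by
  classical
  induction s using Finset.induction_on with
  | empty => simp [Real.zero_rpow (by linarith : p ≠ 0)]
  | insert i s hi ih =>
    have hindep_i : IndepFun (∑ j ∈ s, X j) (X i) μ :=
      hindep.indepFun_finsetSum_of_notMem₀ (fun j ↦ (hLp j).aemeasurable) hi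
    have hstep := integral_abs_add_rpow_le hp1 hp2 (memLp_finsetSum' s fun j _ ↦ hLp j)
      (hLp i) hindep_i (hmean i)
    simp only [Finset.sum_apply] at hstep
    simp only [Finset.sum_insert hi, add_comm (X i _)]
    linarith

lemma measure_le_abs_average_le {ι : Type*} {X : ι → Ω → ℝ} {A ε : ℝ} (hp1 : 1 < p)
    (hp2 : p ≤ 2) (hindep : iIndepFun X μ) (hLp : ∀ i, MemLp (X i) (ENNReal.ofReal p) μ)
    (hmean : ∀ i, μ[X i] = 0) (hA : ∀ i, ∫ ω, |X i ω| ^ p ∂μ = A) (hε : 0 < ε)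
    (s : Finset ι) :
    μ {ω | ε ≤ |(s.card : ℝ)⁻¹ * ∑ i ∈ s, X i ω|} ≤
      ENNReal.ofReal (2 * p * A / ε ^ p * (s.card : ℝ) ^ (1 - p)) := by
  rcases s.eq_empty_or_nonempty with rfl | hs
  · simp [hε.not_ge]
  have hL : (0 : ℝ) < s.card := by exact_mod_cast hs.card_pos
  have hset : {ω | ε ≤ |(s.card : ℝ)⁻¹ * ∑ i ∈ s, X i ω|} =
      {ω | ε * s.card ≤ |∑ i ∈ s, X i ω|} := by
    ext ω
    rw [Set.mem_ofPred_eq, Set.mem_ofPred_eq, abs_mul, abs_inv, Nat.abs_cast, ← div_eq_inv_mul,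
      le_div_iff₀ hL]
  have hmoment := integral_abs_sum_rpow_le hp1 hp2 hindep hLp hmean s
  rw [Finset.sum_congr rfl fun i _ ↦ hA i, Finset.sum_const, nsmul_eq_mul] at hmoment
  rw [hset]
  refine (measure_le_abs_le_ofReal_integral_rpow_div (f := fun ω ↦ ∑ i ∈ s, X i ω)
    (by linarith) (by positivity)
    ((memLp_finsetSum s fun i _ ↦ hLp i).integrable_abs_rpow (by linarith))).trans
    (ENNReal.ofReal_le_ofReal ?_)
  calc (∫ ω, |∑ i ∈ s, X i ω| ^ p ∂μ) / (ε * s.card) ^ p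
      ≤ 2 * p * (s.card * A) / (ε * s.card) ^ p := by gcongr
    _ = 2 * p * A / ε ^ p * (s.card : ℝ) ^ (1 - p) := by
        rw [Real.mul_rpow hε.le hL.le, Real.rpow_sub hL, Real.rpow_one]
        field_simp

end Moments

lemma summable_natFloor_rpow_rpow_neg {D r : ℝ} (hr : 0 < r) (hDr : 1 < D * r) :
    Summable fun n : ℕ ↦ (⌊(n : ℝ) ^ D⌋₊ : ℝ) ^ (-r) := by
  have hD : 0 < D := pos_of_mul_pos_left (by linarith) hr.le
  refine ((Real.summable_nat_rpow.2 (by linarith : -(D * r) < -1)).mul_left (2 ^ r))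
    |>.of_nonneg_of_le (fun n ↦ Real.rpow_nonneg (Nat.cast_nonneg _) _) fun n ↦ ?_
  rcases Nat.eq_zero_or_pos n with rfl | hn
  · simp [Real.zero_rpow hD.ne', Real.zero_rpow (neg_ne_zero.2 hr.ne'),
      Real.zero_rpow (neg_ne_zero.2 (by positivity : D * r ≠ 0))]
  have hnD : 1 ≤ (n : ℝ) ^ D := Real.one_le_rpow (by exact_mod_cast hn) hD.le
  calc (⌊(n : ℝ) ^ D⌋₊ : ℝ) ^ (-r) ≤ ((n : ℝ) ^ D / 2) ^ (-r) :=
        Real.rpow_le_rpow_of_nonpos (by positivity) (Nat.div_two_lt_floor hnD).le (by linarith)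
    _ = 2 ^ r * (n : ℝ) ^ (-(D * r)) := by
        rw [Real.div_rpow (by positivity) zero_le_two, ← Real.rpow_mul (Nat.cast_nonneg n),
          Real.rpow_neg zero_le_two, div_inv_eq_mul, mul_comm, mul_neg]

lemma ae_tendsto_zero_of_tsum_measure_le_abs_ne_top {Ω : Type*} [MeasurableSpace Ω]
    {μ : Measure Ω} {f : ℕ → Ω → ℝ} (h : ∀ ε > 0, ∑' n, μ {ω | ε ≤ |f n ω|} ≠ ⊤) :
    ∀ᵐ ω ∂μ, Tendsto (fun n ↦ f n ω) atTop (𝓝 0) := by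
  have hall : ∀ᵐ ω ∂μ, ∀ m : ℕ, ∀ᶠ n in atTop, |f n ω| < 1 / (m + 1) :=
    ae_all_iff.2 fun m ↦ by
      simpa only [Set.mem_ofPred_eq, not_le] using
        ae_eventually_notMem (h _ Nat.one_div_pos_of_nat)
  filter_upwards [hall] with ω hω
  refine NormedAddGroup.tendsto_nhds_zero.2 fun ε hε ↦ ?_
  obtain ⟨m, hm⟩ := exists_nat_one_div_lt hε
  filter_upwards [hω m] with n hn
  exact hn.trans hm

theorem stmt8_general
    {Ω : Type*} [MeasurableSpace Ω] (μ : Measure Ω) [IsProbabilityMeasure μ]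
    (X : ℕ → Ω → ℝ)
    (hindep : iIndepFun X μ)
    (hident : ∀ k, IdentDistrib (X k) (X 0) μ μ)
    (p : ℝ) (hp1 : 1 < p) (hp2 : p < 2)
    (hLp : MemLp (X 0) (ENNReal.ofReal p) μ)
    (hmean : (∫ ω, X 0 ω ∂μ) = 0)
    (D : ℝ) (hD : 1 < D * (p - 1)) :
    ∀ v : ℕ → ℕ,
      ∀ᵐ ω ∂μ, Tendsto
        (fun n : ℕ => ((⌊(n : ℝ) ^ D⌋₊ : ℝ))⁻¹ *
          ∑ k ∈ Finset.range ⌊(n : ℝ) ^ D⌋₊, X (v n + 1 + k) ω)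
        atTop (nhds 0) := by
  intro v
  refine ae_tendsto_zero_of_tsum_measure_le_abs_ne_top fun ε hε ↦ ?_
  set C := 2 * p * (∫ ω, |X 0 ω| ^ p ∂μ) / ε ^ p
  have hbound : ∀ n : ℕ, μ {ω | ε ≤ |(⌊(n : ℝ) ^ D⌋₊ : ℝ)⁻¹ *
      ∑ k ∈ Finset.range ⌊(n : ℝ) ^ D⌋₊, X (v n + 1 + k) ω|} ≤
      ENNReal.ofReal (C * (⌊(n : ℝ) ^ D⌋₊ : ℝ) ^ (1 - p)) := fun n ↦ by
    simpa using measure_le_abs_average_le (X := fun k ↦ X (v n + 1 + k)) hp1 hp2.le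
      (hindep.precomp (add_right_injective _))
      (fun k ↦ (hident _).symm.memLp_snd hLp)
      (fun k ↦ by rw [(hident _).integral_eq, hmean])
      (fun k ↦ ((hident _).comp (by fun_prop : Measurable fun t : ℝ ↦ |t| ^ p)).integral_eq)
      hε (Finset.range ⌊(n : ℝ) ^ D⌋₊)
  have hsum : Summable fun n : ℕ ↦ C * (⌊(n : ℝ) ^ D⌋₊ : ℝ) ^ (1 - p) := by
    simpa only [neg_sub] using (summable_natFloor_rpow_rpow_neg (by linarith) hD).mul_left C
  exact ne_top_of_le_ne_top hsum.tsum_ofReal_ne_top (ENNReal.tsum_le_tsum hbound)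

/-- For an i.i.d. sequence `(X_k : k ≥ 0)` of mean-zero real random variables with
`E[|X_0|^p] < ∞` for some `1 < p < 2`, and any `D > 0` with `D(p-1) > 1`, the moving
averages `M(v_n, ⌊n^D⌋) X_0` converge to `0` almost surely, for every sequence `(v_n)`
of nonnegative integers. -/
theorem stmt8
    {Ω : Type*} [MeasurableSpace Ω] (μ : Measure Ω) [IsProbabilityMeasure μ]
    (X : ℕ → Ω → ℝ) (hmeas : ∀ k, Measurable (X k))
    (hindep : iIndepFun X μ)
    (hident : ∀ k, IdentDistrib (X k) (X 0) μ μ)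
    (p : ℝ) (hp1 : 1 < p) (hp2 : p < 2)
    (hLp : MemLp (X 0) (ENNReal.ofReal p) μ)
    (hmean : (∫ ω, X 0 ω ∂μ) = 0)
    (D : ℝ) (hD0 : 0 < D) (hD : 1 < D * (p - 1)) :
    ∀ v : ℕ → ℕ,
      ∀ᵐ ω ∂μ, Tendsto
        (fun n : ℕ => ((⌊(n : ℝ) ^ D⌋₊ : ℝ))⁻¹ *
          ∑ k ∈ Finset.range ⌊(n : ℝ) ^ D⌋₊, X (v n + 1 + k) ω)
        atTop (nhds 0) :=
  stmt8_general μ X hindep hident p hp1 hp2 hLp hmean D hD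
end

section
/- Let (X,B,μ) be a standard probability space where (X,d) is a compact metric space and B contains the Borel sets. Let T be an invertible measure-preserving transformation admitting a finite measurable partition P such that the partitions (T^i P : i ∈ ℤ) are jointly independent (Bernoulli property with generator P) and such that diam(P_n) → 0 as n → ∞, where P_n = ⋁_{i=1-n}^{n-1} T^i P and diam(Q) = sup over elements q of Q of sup{d(x,y) : x,y ∈ q}. Then for every continuous function f : X → ℝ, every sequence of integers (v_n), and every strictly increasing sequence of positive integers (L_n), the moving averages M(v_n,L_n)^T f(x) = (1/L_n) Σ_{i=v_n+1}^{v_n+L_n} f(T^i x) converge to ∫_X f dμ for μ-almost every x ∈ X. -/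
/-!
Approximate `f` uniformly within `ε` by a function `g` that only depends on the atom of
`P_N = ⋁_{|i| < N} T^i P` containing `x`. Then `Z_s = g ∘ T^s - ∫ g` is measurable with respect
to `σ(T^i P : |i + s| < N)`, so by the Bernoulli property `Z_s` is independent of any family of
`Z_t` with `|s - t| ≥ 2N - 1`. Splitting a block sum `∑_{s ∈ F} Z_s` into residue classes modulo
`2N + 1` and expanding the fourth power, only quadruples in which no index is isolated survive,
so `E (∑_{s ∈ F} Z_s)^4 = O(#F^2)`. By Markov's inequality and Borel–Cantelli the moving averages
of `g` then converge almost surely along any `(v_n, L_n)` with `∑ L_n⁻² < ∞`, which is the case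
for strictly increasing `L_n`.
-/

open MeasureTheory Filter

open ProbabilityTheory Finset Topology

theorem Fin.exists_forall_eq_or_eq_of_forall_exists_ne {κ : Type*} {q : Fin 4 → κ}
    (hq : ∀ i, ∃ j ≠ i, q j = q i) : ∃ i j, ∀ k, q k = q i ∨ q k = q j := by
  simp only [Fin.forall_fin_succ, Fin.exists_fin_succ] at hq ⊢
  grind

theorem card_filter_forall_exists_ne_le {κ : Type*} [DecidableEq κ] (F : Finset κ) :
    #{q ∈ Fintype.piFinset (fun _ : Fin 4 => F) | ∀ i, ∃ j ≠ i, q j = q i} ≤ 16 * #F ^ 2 := by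
  calc _ ≤ #((F ×ˢ F).biUnion fun p => Fintype.piFinset fun _ : Fin 4 => {p.1, p.2}) := by
        refine card_le_card fun q hq => ?_
        simp only [mem_filter, Fintype.mem_piFinset] at hq
        obtain ⟨i, j, hij⟩ := Fin.exists_forall_eq_or_eq_of_forall_exists_ne hq.2
        simp only [mem_biUnion, mem_product, Fintype.mem_piFinset, mem_insert, mem_singleton]
        exact ⟨(q i, q j), ⟨hq.1 i, hq.1 j⟩, hij⟩
    _ ≤ ∑ p ∈ F ×ˢ F, #(Fintype.piFinset fun _ : Fin 4 => ({p.1, p.2} : Finset κ)) :=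
        card_biUnion_le
    _ ≤ ∑ _p ∈ F ×ˢ F, 2 ^ 4 := by
        gcongr with p
        rw [Fintype.card_piFinset, Fin.prod_const]
        exact Nat.pow_le_pow_left card_le_two 4
    _ = 16 * #F ^ 2 := by simp only [sum_const, card_product, smul_eq_mul]; ring

theorem pow_four_sum_le_card_pow_mul_sum_pow_four {ι : Type*} (s : Finset ι) (f : ι → ℝ) :
    (∑ i ∈ s, f i) ^ 4 ≤ #s ^ 3 * ∑ i ∈ s, f i ^ 4 :=
  calc (∑ i ∈ s, f i) ^ 4 = ((∑ i ∈ s, f i) ^ 2) ^ 2 := by ring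
    _ ≤ (#s * ∑ i ∈ s, f i ^ 2) ^ 2 := by gcongr; exact sq_sum_le_card_mul_sum_sq
    _ = #s ^ 2 * (∑ i ∈ s, f i ^ 2) ^ 2 := by ring
    _ ≤ #s ^ 2 * (#s * ∑ i ∈ s, (f i ^ 2) ^ 2) := by gcongr; exact sq_sum_le_card_mul_sum_sq
    _ = #s ^ 3 * ∑ i ∈ s, f i ^ 4 := by simp only [← pow_mul]; ring

section Probability

variable {Ω ι κ : Type*} {mΩ : MeasurableSpace Ω} {μ : Measure Ω}

theorem ae_tendsto_of_forall_ae_eventually_abs_sub_le {u : ℕ → Ω → ℝ} {c : ℝ}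
    (h : ∀ ε > 0, ∀ᵐ ω ∂μ, ∀ᶠ n in atTop, |u n ω - c| ≤ ε) :
    ∀ᵐ ω ∂μ, Tendsto (fun n => u n ω) atTop (𝓝 c) := by
  have h' : ∀ᵐ ω ∂μ, ∀ k : ℕ, ∀ᶠ n in atTop, |u n ω - c| ≤ 1 / (k + 1) :=
    ae_all_iff.2 fun k => h _ Nat.one_div_pos_of_nat
  filter_upwards [h'] with ω hω
  refine Metric.tendsto_nhds.2 fun ε hε => ?_
  obtain ⟨k, hk⟩ := exists_nat_one_div_lt hε
  exact (hω k).mono fun n hn => (Real.dist_eq _ _).trans_le hn |>.trans_lt hk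

theorem integrable_pow_sum_of_abs_le [IsFiniteMeasure μ] {Z : κ → Ω → ℝ} {C : ℝ}
    (hZ : ∀ s, Measurable (Z s)) (hC : ∀ s ω, |Z s ω| ≤ C) (F : Finset κ) (n : ℕ) :
    Integrable (fun ω => (∑ s ∈ F, Z s ω) ^ n) μ := by
  refine .of_bound ((measurable_sum F fun s _ => hZ s).pow_const n).aestronglyMeasurable
    ((#F * C) ^ n) (ae_of_all _ fun ω => ?_)
  rw [Real.norm_eq_abs, abs_pow]
  gcongr
  calc |∑ s ∈ F, Z s ω| ≤ ∑ s ∈ F, |Z s ω| := abs_sum_le_sum_abs _ _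
    _ ≤ #F * C := by simpa using sum_le_card_nsmul F _ C fun s _ => hC s ω

theorem ae_tendsto_div_of_integral_pow_four_le [IsFiniteMeasure μ] {Y : ℕ → Ω → ℝ}
    {a : ℕ → ℝ} {K : ℝ} (hY : ∀ n, Integrable (fun ω => Y n ω ^ 4) μ) (ha : ∀ n, 0 < a n)
    (hmom : ∀ n, ∫ ω, Y n ω ^ 4 ∂μ ≤ K * a n ^ 2) (hsum : Summable fun n => 1 / a n ^ 2) :
    ∀ᵐ ω ∂μ, Tendsto (fun n => Y n ω / a n) atTop (𝓝 0) := by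
  have hK : 0 ≤ K := nonneg_of_mul_nonneg_left
    ((integral_nonneg fun ω => by positivity).trans (hmom 0)) (by have := ha 0; positivity)
  refine ae_tendsto_of_forall_ae_eventually_abs_sub_le fun ε hε => ?_
  set E : ℕ → Set Ω := fun n => {ω | (ε * a n) ^ 4 ≤ Y n ω ^ 4}
  have hE : ∀ n, μ (E n) ≤ ENNReal.ofReal (K / ε ^ 4 * (1 / a n ^ 2)) := by
    intro n
    have han := ha n
    have hmarkov := (mul_meas_ge_le_integral_of_nonneg (ae_of_all _ fun ω => by positivity)
      (hY n) ((ε * a n) ^ 4)).trans (hmom n)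
    rw [ENNReal.le_ofReal_iff_toReal_le (measure_ne_top _ _) (by positivity)]
    calc (μ (E n)).toReal ≤ K * a n ^ 2 / (ε * a n) ^ 4 := by
          rw [le_div_iff₀' (by positivity)]; exact hmarkov
      _ = K / ε ^ 4 * (1 / a n ^ 2) := by field_simp
  have hsumE : ∑' n, μ (E n) ≠ ⊤ := by
    exact ne_top_of_le_ne_top ENNReal.ofReal_ne_top ((ENNReal.tsum_le_tsum hE).trans_eq
      (ENNReal.ofReal_tsum_of_nonneg (fun n => by positivity) (hsum.mul_left _)).symm)
  filter_upwards [ae_eventually_notMem hsumE] with ω hω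
  refine hω.mono fun n hn => ?_
  have han := ha n
  replace hn : Y n ω ^ 4 < (ε * a n) ^ 4 := not_le.1 hn
  rw [sub_zero, abs_div, abs_of_pos han, div_le_iff₀ han]
  exact (pow_lt_pow_iff_left₀ (abs_nonneg _) (by positivity) four_ne_zero).1
    (by rwa [Even.pow_abs (by decide)]) |>.le

section Independence

variable {m : ι → MeasurableSpace Ω}

theorem integral_mul_prod_eq_zero_of_iIndep {W : κ → Set ι} {Z : κ → Ω → ℝ}
    (h_le : ∀ i, m i ≤ mΩ) (h_indep : iIndep m μ)
    (hZ : ∀ s, Measurable[⨆ i ∈ W s, m i] (Z s)) {a : κ} (ha : ∫ ω, Z a ω ∂μ = 0)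
    {β : Type*} (S : Finset β) (q : β → κ) (hS : ∀ b ∈ S, Disjoint (W a) (W (q b))) :
    ∫ ω, Z a ω * ∏ b ∈ S, Z (q b) ω ∂μ = 0 := by
  have hprod : Measurable[⨆ i ∈ ⋃ b ∈ S, W (q b), m i] fun ω => ∏ b ∈ S, Z (q b) ω :=
    Finset.measurable_prod _ fun b hb =>
      (hZ (q b)).mono (biSup_mono fun i hi => Set.mem_biUnion hb hi) le_rfl
  have hindep : IndepFun (Z a) (fun ω => ∏ b ∈ S, Z (q b) ω) μ := by
    rw [IndepFun_iff_Indep]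
    exact indep_of_indep_of_le_left (indep_of_indep_of_le_right
      (indep_iSup_of_disjoint h_le h_indep (Set.disjoint_iUnion₂_right.2 hS))
      hprod.comap_le) (hZ a).comap_le
  have hle : ∀ K : Set ι, (⨆ i ∈ K, m i) ≤ mΩ := fun K => iSup₂_le fun i _ => h_le i
  rw [hindep.integral_fun_mul_eq_mul_integral ((hZ a).mono (hle _) le_rfl).aestronglyMeasurable
    (hprod.mono (hle _) le_rfl).aestronglyMeasurable, ha, zero_mul]

theorem integral_pow_four_sum_le_of_pairwiseDisjoint [IsProbabilityMeasure μ] {W : κ → Set ι}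
    {Z : κ → Ω → ℝ} (h_le : ∀ i, m i ≤ mΩ) (h_indep : iIndep m μ)
    (hZ : ∀ s, Measurable[⨆ i ∈ W s, m i] (Z s)) {C : ℝ}
    (hC : ∀ s ω, |Z s ω| ≤ C) (hcenter : ∀ s, ∫ ω, Z s ω ∂μ = 0) {F : Finset κ}
    (hF : (F : Set κ).PairwiseDisjoint W) :
    ∫ ω, (∑ s ∈ F, Z s ω) ^ 4 ∂μ ≤ 16 * C ^ 4 * #F ^ 2 := by
  classical
  set Q := Fintype.piFinset fun _ : Fin 4 => F
  have hZm : ∀ s, Measurable (Z s) := fun s => (hZ s).mono (iSup₂_le fun i _ => h_le i) le_rfl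
  have hbound : ∀ q : Fin 4 → κ, ∀ ω, ‖∏ i, Z (q i) ω‖ ≤ C ^ 4 := fun q ω => by
    rw [norm_prod, ← Fin.prod_const]
    exact prod_le_prod (fun _ _ => norm_nonneg _) fun i _ => hC _ ω
  have hexpand : ∀ ω, (∑ s ∈ F, Z s ω) ^ 4 = ∑ q ∈ Q, ∏ i, Z (q i) ω := fun ω => by
    rw [← Fin.prod_const, prod_univ_sum]
  -- a quadruple with an index different from the other three contributes `0` by independence
  have hterm : ∀ q ∈ Q,
      ∫ ω, ∏ i, Z (q i) ω ∂μ ≤ if ∀ i, ∃ j ≠ i, q j = q i then C ^ 4 else 0 := by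
    intro q hq
    split_ifs with hpaired
    · refine (le_abs_self _).trans ?_
      simpa using norm_integral_le_of_norm_le_const (μ := μ) (ae_of_all _ (hbound q))
    · push Not at hpaired
      obtain ⟨i, hi⟩ := hpaired
      have hsplit : ∀ ω, ∏ j, Z (q j) ω = Z (q i) ω * ∏ j ∈ univ.erase i, Z (q j) ω :=
        fun ω => (mul_prod_erase _ (fun j => Z (q j) ω) (mem_univ i)).symm
      simp_rw [hsplit]
      refine (integral_mul_prod_eq_zero_of_iIndep h_le h_indep hZ (hcenter _) _ q
        fun j hj => ?_).le
      rw [Fintype.mem_piFinset] at hq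
      exact hF (hq i) (hq j) (hi j (ne_of_mem_erase hj)).symm
  calc ∫ ω, (∑ s ∈ F, Z s ω) ^ 4 ∂μ = ∑ q ∈ Q, ∫ ω, ∏ i, Z (q i) ω ∂μ := by
        simp_rw [hexpand]
        exact integral_finsetSum _ fun q _ => .of_bound
          (measurable_prod _ fun i _ => hZm (q i)).aestronglyMeasurable _
          (ae_of_all _ (hbound q))
    _ ≤ ∑ q ∈ Q, if ∀ i, ∃ j ≠ i, q j = q i then C ^ 4 else 0 := sum_le_sum hterm
    _ = #{q ∈ Q | ∀ i, ∃ j ≠ i, q j = q i} * C ^ 4 := by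
        rw [sum_ite, sum_const_zero, add_zero, sum_const, nsmul_eq_mul]
    _ ≤ (16 * #F ^ 2 : ℕ) * C ^ 4 := by
        gcongr ?_ * _
        exact_mod_cast card_filter_forall_exists_ne_le F
    _ = 16 * C ^ 4 * #F ^ 2 := by push_cast; ring

theorem integral_pow_four_sum_le_of_separated [IsProbabilityMeasure μ] {W : ℤ → Set ι}
    {Z : ℤ → Ω → ℝ} (h_le : ∀ i, m i ≤ mΩ) (h_indep : iIndep m μ)
    (hZ : ∀ s, Measurable[⨆ i ∈ W s, m i] (Z s)) {C : ℝ} (hC : ∀ s ω, |Z s ω| ≤ C)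
    (hcenter : ∀ s, ∫ ω, Z s ω ∂μ = 0) {r : ℕ} (hr : 0 < r)
    (hW : ∀ s t, (r : ℤ) ≤ |s - t| → Disjoint (W s) (W t)) (F : Finset ℤ) :
    ∫ ω, (∑ s ∈ F, Z s ω) ^ 4 ∂μ ≤ 16 * C ^ 4 * r ^ 4 * #F ^ 2 := by
  set R := Ico (0 : ℤ) r
  set residueClass : ℤ → Finset ℤ := fun c => {s ∈ F | s % r = c}
  have hZm : ∀ s, Measurable (Z s) := fun s => (hZ s).mono (iSup₂_le fun i _ => h_le i) le_rfl
  have hint : ∀ c, Integrable (fun ω => (∑ s ∈ residueClass c, Z s ω) ^ 4) μ :=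
    fun c => integrable_pow_sum_of_abs_le hZm hC _ 4
  have hsplit : ∀ ω, ∑ s ∈ F, Z s ω = ∑ c ∈ R, ∑ s ∈ residueClass c, Z s ω := fun ω =>
    (sum_fiberwise_of_maps_to (fun s _ => mem_Ico.2
      ⟨Int.emod_nonneg _ (by omega), Int.emod_lt_of_pos _ (by omega)⟩) _).symm
  have hclass : ∀ c, ∫ ω, (∑ s ∈ residueClass c, Z s ω) ^ 4 ∂μ ≤ 16 * C ^ 4 * #F ^ 2 := by
    intro c
    refine (integral_pow_four_sum_le_of_pairwiseDisjoint h_le h_indep hZ hC hcenter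
      fun s hs t ht hst => hW s t ?_).trans (by gcongr; exact filter_subset _ F)
    simp only [residueClass, coe_filter] at hs ht
    have hdvd : (r : ℤ) ∣ s - t := Int.ModEq.dvd (ht.2.trans hs.2.symm)
    exact Int.le_of_dvd (abs_pos.2 (sub_ne_zero.2 hst)) ((dvd_abs _ _).2 hdvd)
  calc ∫ ω, (∑ s ∈ F, Z s ω) ^ 4 ∂μ
      ≤ ∫ ω, (r : ℝ) ^ 3 * ∑ c ∈ R, (∑ s ∈ residueClass c, Z s ω) ^ 4 ∂μ := by
        refine integral_mono_of_nonneg (ae_of_all _ fun ω => by positivity)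
          ((integrable_finsetSum _ fun c _ => hint c).const_mul _) (ae_of_all _ fun ω => ?_)
        simpa [hsplit ω, R] using pow_four_sum_le_card_pow_mul_sum_pow_four R _
    _ = (r : ℝ) ^ 3 * ∑ c ∈ R, ∫ ω, (∑ s ∈ residueClass c, Z s ω) ^ 4 ∂μ := by
        rw [integral_const_mul, integral_finsetSum _ fun c _ => hint c]
    _ ≤ (r : ℝ) ^ 3 * ∑ _c ∈ R, 16 * C ^ 4 * (#F : ℝ) ^ 2 := by
        gcongr with c; exact hclass c
    _ = 16 * C ^ 4 * r ^ 4 * #F ^ 2 := by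
        simp only [sum_const, R, Int.card_Ico, sub_zero, Int.toNat_natCast, nsmul_eq_mul]; ring

end Independence

end Probability

section Dynamics

variable {X : Type*} {T : Equiv.Perm X}

variable (T) in
abbrev partitionSigma (P : Finset (Set X)) (i : ℤ) : MeasurableSpace X :=
  MeasurableSpace.generateFrom ((fun p => ⇑(T ^ i) '' p) '' ↑P)

variable {P : Finset (Set X)}

theorem comap_partitionSigma (i j : ℤ) :
    (partitionSigma T P i).comap ⇑(T ^ j) = partitionSigma T P (i - j) := by
  rw [partitionSigma, MeasurableSpace.comap_generateFrom, Set.image_image]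
  congr 2 with p
  rw [show T ^ i = T ^ j * T ^ (i - j) by rw [← zpow_add, add_sub_cancel], Equiv.Perm.coe_mul,
    Set.image_comp, Equiv.preimage_image]

theorem Measurable.comp_perm_zpow_of_iSup_partitionSigma {J : Set ℤ} {g : X → ℝ}
    (hg : Measurable[⨆ i ∈ J, partitionSigma T P i] g) (j : ℤ) :
    Measurable[⨆ i ∈ (· - j) '' J, partitionSigma T P i] (g ∘ ⇑(T ^ j)) := by
  refine hg.comp (measurable_iff_comap_le.2 ?_)
  simp_rw [MeasurableSpace.comap_iSup, comap_partitionSigma, iSup_image, le_rfl]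

theorem disjoint_image_sub_of_subset_Ico {J : Set ℤ} {a : ℤ} {r : ℕ}
    (hJ : J ⊆ Set.Ico a (a + r)) {s t : ℤ} (hst : (r : ℤ) ≤ |s - t|) :
    Disjoint ((· - s) '' J) ((· - t) '' J) := by
  rw [Set.disjoint_left]
  rintro _ ⟨i, hi, rfl⟩ ⟨j, hj, hij⟩
  have hi := hJ hi
  have hj := hJ hj
  simp only [Set.mem_Ico] at hi hj
  dsimp only at hij
  rcases le_abs.1 hst with h | h <;> omega

theorem measurable_comp_of_finite {α β γ : Type*} {mα : MeasurableSpace α} [MeasurableSpace γ]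
    [Finite β] {w : α → β} (hw : ∀ b, MeasurableSet (w ⁻¹' {b})) (h : β → γ) :
    Measurable (h ∘ w) := fun s _ => by
  rw [Set.preimage_comp, ← Set.biUnion_preimage_singleton]
  exact .biUnion (Set.to_countable _) fun b _ => hw b

theorem exists_measurable_iSup_partitionSigma_abs_sub_le [PseudoMetricSpace X] [BoundedSpace X]
    [Nonempty X] (hPdisj : (P : Set (Set X)).PairwiseDisjoint id)
    (hPcover : ⋃ p ∈ P, p = Set.univ) {J : Finset ℤ} {δ ε : ℝ} {f : X → ℝ}
    (hJ : ∀ s : ℤ → Set X, (∀ i, s i ∈ P) → Metric.diam (⋂ i ∈ J, ⇑(T ^ i) '' s i) ≤ δ)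
    (hf : ∀ x y, dist x y ≤ δ → |f x - f y| ≤ ε) :
    ∃ g : X → ℝ, Measurable[⨆ i ∈ (J : Set ℤ), partitionSigma T P i] g ∧
      ∀ x, |f x - g x| ≤ ε := by
  have hcell : ∀ x, ∃ p : P, x ∈ (p : Set X) := fun x => by
    obtain ⟨p, hp, hx⟩ := Set.mem_iUnion₂.1 (hPcover.symm ▸ Set.mem_univ x)
    exact ⟨⟨p, hp⟩, hx⟩
  choose cell hcell using hcell
  have cell_eq : ∀ x (p : P), x ∈ (p : Set X) → cell x = p := fun x p hx => by
    by_contra hne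
    exact Set.disjoint_left.1 (hPdisj (cell x).2 p.2 (Subtype.coe_injective.ne hne)) (hcell x) hx
  -- `itinerary x i` is the cell of `P` containing `T^{-i} x`, i.e. the atom of `T^i P` at `x`
  set itinerary : X → (J → P) := fun x i => cell ((T ^ (i : ℤ)).symm x)
  have itinerary_eq_iff : ∀ x c, itinerary x = c ↔ x ∈ ⋂ i : J, ⇑(T ^ (i : ℤ)) '' c i :=
    fun x c => by
      simp only [funext_iff, Set.mem_iInter, Equiv.image_eq_preimage_symm, Set.mem_preimage]
      exact forall_congr' fun i => ⟨fun h => h ▸ hcell _, cell_eq _ _⟩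
  refine ⟨(f ∘ Function.invFun itinerary) ∘ itinerary,
    measurable_comp_of_finite (fun c => ?_) _, fun x => ?_⟩
  · rw [show itinerary ⁻¹' {c} = ⋂ i : J, ⇑(T ^ (i : ℤ)) '' c i from
      Set.ext fun x => itinerary_eq_iff x c]
    exact .iInter fun i => le_iSup₂ (f := fun i (_ : i ∈ (J : Set ℤ)) => partitionSigma T P i)
      i i.2 _ (MeasurableSpace.measurableSet_generateFrom ⟨c i, (c i).2, rfl⟩)
  · have hmem : ∀ z, itinerary z = itinerary x →
        z ∈ ⋂ i ∈ J, ⇑(T ^ i) '' cell ((T ^ i).symm x) := fun z hz =>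
      Set.mem_iInter₂.2 fun i hi => Set.mem_iInter.1 ((itinerary_eq_iff z _).1 hz) ⟨i, hi⟩
    exact hf _ _ ((Metric.dist_le_diam_of_mem (Bornology.IsBounded.all _) (hmem x rfl)
      (hmem _ (Function.invFun_eq ⟨x, rfl⟩))).trans (hJ _ fun i => (cell _).2))

theorem abs_movAvg_sub_movAvg_le (T : Equiv.Perm X) {f g : X → ℝ} {ε : ℝ}
    (hfg : ∀ x, |f x - g x| ≤ ε) (v : ℤ) (L : ℕ) (x : X) :
    |movAvg T f v L x - movAvg T g v L x| ≤ ε := by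
  rw [movAvg, movAvg, ← mul_sub, ← sum_sub_distrib, abs_mul, abs_inv, Nat.abs_cast]
  rcases L.eq_zero_or_pos with rfl | hL
  · simpa using (abs_nonneg _).trans (hfg x)
  rw [inv_mul_le_iff₀ (by positivity)]
  calc |∑ i ∈ range L, (f ((T ^ (v + 1 + (i : ℤ))) x) - g ((T ^ (v + 1 + (i : ℤ))) x))|
      ≤ ∑ i ∈ range L, |f ((T ^ (v + 1 + (i : ℤ))) x) - g ((T ^ (v + 1 + (i : ℤ))) x)| :=
        abs_sum_le_sum_abs _ _
    _ ≤ ∑ _i ∈ range L, ε := sum_le_sum fun i _ => hfg _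
    _ = L * ε := by simp

theorem movAvg_sub_eq_sum_div (T : Equiv.Perm X) (g : X → ℝ) (c : ℝ) (v : ℤ) {L : ℕ}
    (hL : 0 < L) (x : X) :
    movAvg T g v L x - c =
      (∑ s ∈ (range L).image fun j : ℕ => v + 1 + (j : ℤ), (g ((T ^ s) x) - c)) / L := by
  rw [sum_image fun i _ j _ h => by simpa using h, sum_sub_distrib, sum_const, card_range,
    nsmul_eq_mul, movAvg]
  field_simp

variable [MeasurableSpace X] {μ : Measure X}

theorem abs_movAvg_sub_integral_le_of_abs_sub_le [IsProbabilityMeasure μ] (T : Equiv.Perm X)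
    {f g : X → ℝ} {ε η : ℝ} (hf : Integrable f μ) (hg : Integrable g μ)
    (hfg : ∀ x, |f x - g x| ≤ ε) {v : ℤ} {L : ℕ} {x : X}
    (h : |movAvg T g v L x - ∫ y, g y ∂μ| ≤ η) :
    |movAvg T f v L x - ∫ y, f y ∂μ| ≤ 2 * ε + η := by
  have hint : |∫ y, f y ∂μ - ∫ y, g y ∂μ| ≤ ε := by
    rw [← integral_sub hf hg]
    simpa using norm_integral_le_of_norm_le_const (μ := μ) (f := fun y => f y - g y)
      (ae_of_all _ fun y => by simpa using hfg y)
  linarith [abs_movAvg_sub_movAvg_le T hfg v L x, abs_sub_comm (∫ y, f y ∂μ) (∫ y, g y ∂μ),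
    abs_sub_le (movAvg T f v L x) (movAvg T g v L x) (∫ y, f y ∂μ),
    abs_sub_le (movAvg T g v L x) (∫ y, g y ∂μ) (∫ y, f y ∂μ)]

theorem partitionSigma_le (hT : ∀ i : ℤ, Measurable ⇑(T ^ i)) (hP : ∀ p ∈ P, MeasurableSet p)
    (i : ℤ) : partitionSigma T P i ≤ ‹MeasurableSpace X› := by
  refine MeasurableSpace.generateFrom_le ?_
  rintro _ ⟨p, hp, rfl⟩
  dsimp only
  rw [Equiv.image_eq_preimage_symm, ← Equiv.Perm.inv_def, ← zpow_neg]
  exact hT (-i) (hP p hp)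

theorem iSup_partitionSigma_le (hT : ∀ i : ℤ, Measurable ⇑(T ^ i))
    (hP : ∀ p ∈ P, MeasurableSet p) (J : Set ℤ) :
    ⨆ i ∈ J, partitionSigma T P i ≤ ‹MeasurableSpace X› :=
  iSup₂_le fun i _ => partitionSigma_le hT hP i

theorem MeasureTheory.MeasurePreserving.perm_zpow_s10 (hT' : Measurable T.symm)
    (hT : MeasurePreserving T μ μ) (i : ℤ) : MeasurePreserving ⇑(T ^ i) μ μ := by
  have hsymm : MeasurePreserving T.symm μ μ := hT.symm ⟨T, hT.measurable, hT'⟩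
  induction i using Int.induction_on with
  | zero => simpa using MeasurePreserving.id μ
  | succ i ih => rw [zpow_add_one, Equiv.Perm.coe_mul]; exact ih.comp hT
  | pred i ih => rw [zpow_sub_one, Equiv.Perm.coe_mul, Equiv.Perm.inv_def]; exact ih.comp hsymm

theorem MeasureTheory.MeasurePreserving.integral_comp_perm_zpow_sub_integral
    [IsProbabilityMeasure μ] (hT' : Measurable T.symm) (hT : MeasurePreserving T μ μ)
    {g : X → ℝ} (hg : Integrable g μ) (s : ℤ) :
    ∫ x, (g ((T ^ s) x) - ∫ y, g y ∂μ) ∂μ = 0 := by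
  have hsymm : Measurable (T ^ s).symm := by
    rw [← Equiv.Perm.inv_def, ← zpow_neg]; exact (hT.perm_zpow_s10 hT' (-s)).measurable
  have hcomp : ∫ x, g ((T ^ s) x) ∂μ = ∫ x, g x ∂μ :=
    (hT.perm_zpow_s10 hT' s).integral_comp' (f := ⟨T ^ s, (hT.perm_zpow_s10 hT' s).measurable, hsymm⟩) g
  rw [integral_sub (f := fun x => g ((T ^ s) x))
    ((hT.perm_zpow_s10 hT' s).integrable_comp_of_integrable hg) (integrable_const _), hcomp]
  simp

theorem ae_tendsto_movAvg_of_measurable_iSup_partitionSigma [IsProbabilityMeasure μ]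
    (hT' : Measurable T.symm) (hT : MeasurePreserving T μ μ) (hP : ∀ p ∈ P, MeasurableSet p)
    (hindep : iIndep (partitionSigma T P) μ) {J : Set ℤ} {a : ℤ} {r : ℕ} (hr : 0 < r)
    (hJ : J ⊆ Set.Ico a (a + r)) {g : X → ℝ} {C : ℝ}
    (hg : Measurable[⨆ i ∈ J, partitionSigma T P i] g) (hgC : ∀ x, |g x| ≤ C)
    (v : ℕ → ℤ) {L : ℕ → ℕ} (hLpos : ∀ n, 0 < L n) (hLmono : StrictMono L) :
    ∀ᵐ x ∂μ, Tendsto (fun n => movAvg T g (v n) (L n) x) atTop (𝓝 (∫ x, g x ∂μ)) := by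
  set I := ∫ x, g x ∂μ
  set Z : ℤ → X → ℝ := fun s x => g ((T ^ s) x) - I
  set F : ℕ → Finset ℤ := fun n => (range (L n)).image fun j : ℕ => v n + 1 + (j : ℤ)
  have hTi : ∀ i : ℤ, Measurable ⇑(T ^ i) := fun i => (hT.perm_zpow_s10 hT' i).measurable
  have hle := iSup_partitionSigma_le hTi hP
  have hZ : ∀ s, Measurable[⨆ i ∈ (· - s) '' J, partitionSigma T P i] (Z s) :=
    fun s => (hg.comp_perm_zpow_of_iSup_partitionSigma s).sub_const I
  have hI : |I| ≤ C := by
    simpa using norm_integral_le_of_norm_le_const (μ := μ) (f := g)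
      (ae_of_all _ fun x => by simpa using hgC x)
  have hZC : ∀ s x, |Z s x| ≤ 2 * C :=
    fun s x => (abs_sub _ _).trans (by linarith [hgC ((T ^ s) x)])
  have hgint : Integrable g μ := .of_bound (hg.mono (hle J) le_rfl).aestronglyMeasurable C
    (ae_of_all _ fun x => by simpa using hgC x)
  have hcardF : ∀ n, #(F n) = L n := fun n =>
    (card_image_of_injective _ fun i j h => by simpa using h).trans (card_range _)
  have hmom : ∀ n, ∫ x, (∑ s ∈ F n, Z s x) ^ 4 ∂μ ≤ 16 * (2 * C) ^ 4 * r ^ 4 * (L n : ℝ) ^ 2 :=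
    fun n => by
      simpa [hcardF] using integral_pow_four_sum_le_of_separated (partitionSigma_le hTi hP)
        hindep hZ hZC (hT.integral_comp_perm_zpow_sub_integral hT' hgint) hr
        (fun s t => disjoint_image_sub_of_subset_Ico hJ) (F n)
  have hsum : Summable fun n => 1 / (L n : ℝ) ^ 2 :=
    (Real.summable_one_div_nat_pow.2 one_lt_two).comp_injective hLmono.injective
  filter_upwards [ae_tendsto_div_of_integral_pow_four_le (fun n =>
    integrable_pow_sum_of_abs_le (fun s => (hZ s).mono (hle _) le_rfl) hZC (F n) 4)
    (fun n => Nat.cast_pos.2 (hLpos n)) hmom hsum] with x hx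
  refine (zero_add I ▸ hx.add_const I).congr fun n => ?_
  rw [← movAvg_sub_eq_sum_div T g I (v n) (hLpos n), sub_add_cancel]

end Dynamics

theorem stmt10_general
    {X : Type*} [MetricSpace X] [CompactSpace X]
    [MeasurableSpace X] [OpensMeasurableSpace X]
    (μ : Measure X) [IsProbabilityMeasure μ]
    (T : Equiv.Perm X) (hT' : Measurable (⇑T.symm))
    (hTpres : MeasurePreserving (⇑T) μ μ)
    (P : Finset (Set X))
    (hPmeas : ∀ p ∈ P, MeasurableSet p)
    (hPdisj : (↑P : Set (Set X)).PairwiseDisjoint id)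
    (hPcover : ⋃ p ∈ P, p = Set.univ)
    (hindep : ProbabilityTheory.iIndep
      (fun i : ℤ => MeasurableSpace.generateFrom ((fun p => (⇑(T ^ i)) '' p) '' ↑P)) μ)
    (hdiam : ∀ ε : ℝ, 0 < ε → ∃ N : ℕ, ∀ n ≥ N, ∀ s : ℤ → Set X, (∀ i, s i ∈ P) →
      Metric.diam (⋂ i ∈ Finset.Icc (1 - (n : ℤ)) ((n : ℤ) - 1), (⇑(T ^ i)) '' s i) ≤ ε)
    (f : X → ℝ) (hf : Continuous f)
    (v : ℕ → ℤ) (L : ℕ → ℕ) (hLpos : ∀ n, 0 < L n) (hLmono : StrictMono L) :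
    ∀ᵐ x ∂μ, Tendsto (fun n => movAvg T f (v n) (L n) x) atTop
      (nhds (∫ x, f x ∂μ)) := by
  have := nonempty_of_isProbabilityMeasure μ
  have hTi : ∀ i : ℤ, Measurable ⇑(T ^ i) := fun i => (hTpres.perm_zpow_s10 hT' i).measurable
  obtain ⟨C, hC⟩ := isCompact_univ.exists_bound_of_continuousOn hf.continuousOn
  have hfint : Integrable f μ := .of_bound hf.measurable.aestronglyMeasurable C
    (ae_of_all _ fun x => hC x trivial)
  refine ae_tendsto_of_forall_ae_eventually_abs_sub_le fun ε hε => ?_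
  obtain ⟨δ, hδ, hfδ⟩ := Metric.uniformContinuous_iff.1
    (CompactSpace.uniformContinuous_of_continuous hf) (ε / 3) (by positivity)
  obtain ⟨N, hN⟩ := hdiam (δ / 2) (by positivity)
  obtain ⟨g, hgm, hfg⟩ := exists_measurable_iSup_partitionSigma_abs_sub_le hPdisj hPcover
    (hN N le_rfl) fun x y hxy => (hfδ (by linarith)).le
  have hgC : ∀ x, |g x| ≤ C + ε / 3 := fun x => by
    have := abs_sub (f x) (f x - g x)
    rw [sub_sub_cancel] at this
    linarith [hfg x, hC x trivial, Real.norm_eq_abs (f x)]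
  have hgint : Integrable g μ := .of_bound
    (hgm.mono (iSup_partitionSigma_le hTi hPmeas _) le_rfl).aestronglyMeasurable _
    (ae_of_all _ fun x => by simpa using hgC x)
  filter_upwards [ae_tendsto_movAvg_of_measurable_iSup_partitionSigma hT' hTpres hPmeas hindep
    (a := 1 - N) (r := 2 * N + 1) (by omega)
    (fun i hi => by simp only [coe_Icc, Set.mem_Icc, Set.mem_Ico] at hi ⊢; omega) hgm hgC v
    hLpos hLmono] with x hx
  filter_upwards [hx.eventually (Metric.closedBall_mem_nhds _ (by positivity : 0 < ε / 3))]
    with n hn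
  linarith [abs_movAvg_sub_integral_le_of_abs_sub_le T hfint hgint hfg (η := ε / 3)
    (by rw [← Real.dist_eq]; exact hn)]

/-- Let `(X,d)` be a compact metric space with a Borel probability measure `μ` and `T` an
invertible measure-preserving transformation admitting a finite measurable partition `P`
whose iterates `T^i P`, `i ∈ ℤ`, are jointly independent (Bernoulli property), and such
that the diameters of the atoms of `P_n = ⋁_{i=1-n}^{n-1} T^i P` tend to `0`. Then for
every continuous `f : X → ℝ` all moving averages `M(v_n, L_n)^T f` (with `(L_n)` strictly
increasing positive) converge a.e. to `∫ f dμ`. -/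
theorem stmt10
    {X : Type*} [MetricSpace X] [CompactSpace X]
    [MeasurableSpace X] [OpensMeasurableSpace X]
    (μ : Measure X) [IsProbabilityMeasure μ]
    (T : Equiv.Perm X) (hT : Measurable (⇑T)) (hT' : Measurable (⇑T.symm))
    (hTpres : MeasurePreserving (⇑T) μ μ)
    (P : Finset (Set X))
    (hPmeas : ∀ p ∈ P, MeasurableSet p)
    (hPdisj : (↑P : Set (Set X)).PairwiseDisjoint id)
    (hPcover : ⋃ p ∈ P, p = Set.univ)
    (hindep : ProbabilityTheory.iIndep
      (fun i : ℤ => MeasurableSpace.generateFrom ((fun p => (⇑(T ^ i)) '' p) '' ↑P)) μ)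
    (hdiam : ∀ ε : ℝ, 0 < ε → ∃ N : ℕ, ∀ n ≥ N, ∀ s : ℤ → Set X, (∀ i, s i ∈ P) →
      Metric.diam (⋂ i ∈ Finset.Icc (1 - (n : ℤ)) ((n : ℤ) - 1), (⇑(T ^ i)) '' s i) ≤ ε)
    (f : X → ℝ) (hf : Continuous f)
    (v : ℕ → ℤ) (L : ℕ → ℕ) (hLpos : ∀ n, 0 < L n) (hLmono : StrictMono L) :
    ∀ᵐ x ∂μ, Tendsto (fun n => movAvg T f (v n) (L n) x) atTop
      (nhds (∫ x, f x ∂μ)) :=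
  stmt10_general μ T hT' hTpres P hPmeas hPdisj hPcover hindep hdiam f hf v L hLpos hLmono
end

section
/- Let (X,B,μ) be a probability space, T a measure-preserving transformation, and f ∈ L¹(μ) a nonzero mean-zero function. Then Σ_{n=1}^∞ ‖M(0,n)^T f‖₁ = ∞, where M(0,n)^T f = (1/n) Σ_{k=1}^n f∘T^k. In fact, for every N ≥ 1, Σ_{n=1}^N ‖f‖₁/(n+1) ≤ 3 Σ_{n=1}^{N+1} ‖M(0,n)^T f‖₁. -/
/-!
Telescoping the ergodic sums gives `f ∘ T^[n+1] = (n+1) M_{n+1} f - n M_n f`, so by invariance of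
`μ`, `‖f‖₁ ≤ (n+1) ‖M_{n+1} f‖₁ + n ‖M_n f‖₁`, i.e. `‖f‖₁ / (n+1) ≤ ‖M_{n+1} f‖₁ + ‖M_n f‖₁`.
Summing over `n` bounds the harmonic sums of `‖f‖₁` by twice the partial sums of the `‖M_n f‖₁`,
and the harmonic series diverges.
-/

open MeasureTheory Filter

/-- Ergodic average `M(0,n)^T f (x) = (1/n) ∑_{k=1}^{n} f(T^k x)` for a (not necessarily
invertible) transformation `T`. -/
noncomputable def ergAvg {X : Type*} (T : X → X) (f : X → ℝ) (n : ℕ) (x : X) : ℝ :=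
  (n : ℝ)⁻¹ * ∑ k ∈ Finset.range n, f (T^[k + 1] x)

open Finset

section
variable {a : ℕ → ℝ} {c : ℝ}

theorem sum_Icc_div_succ_le_two_mul_sum (ha : ∀ n, 0 ≤ a n)
    (hkey : ∀ n : ℕ, c / ((n : ℝ) + 1) ≤ a (n + 1) + a n) (N : ℕ) :
    ∑ n ∈ Icc 1 N, c / ((n : ℝ) + 1) ≤ 2 * ∑ n ∈ Icc 1 (N + 1), a n := by
  suffices ∑ n ∈ Icc 1 N, c / ((n : ℝ) + 1) + a (N + 1) ≤ 2 * ∑ n ∈ Icc 1 (N + 1), a n by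
    linarith [ha (N + 1)]
  induction N with
  | zero => simpa [two_mul] using ha 1
  | succ N ih =>
    rw [sum_Icc_succ_top (by omega), sum_Icc_succ_top (by omega : 1 ≤ N + 1 + 1)]
    have := hkey (N + 1)
    push_cast at this ⊢
    linarith

theorem not_summable_succ_of_div_succ_le (hc : 0 < c)
    (hkey : ∀ n : ℕ, c / ((n : ℝ) + 1) ≤ a (n + 1) + a n) :
    ¬ Summable (fun n => a (n + 1)) := by
  intro h
  have hharm : Summable (fun n : ℕ => c / ((n : ℝ) + 1)) :=
    (h.add ((summable_nat_add_iff 1).mp h)).of_nonneg_of_le (fun n => by positivity) hkey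
  simp_rw [div_eq_mul_inv, summable_mul_left_iff hc.ne'] at hharm
  exact Real.not_summable_natCast_inv ((summable_nat_add_iff 1).mp (by exact_mod_cast hharm))
end

section
variable {X : Type*} (T : X → X) (f : X → ℝ)

theorem natCast_mul_ergAvg (n : ℕ) (x : X) :
    (n : ℝ) * ergAvg T f n x = ∑ k ∈ range n, f (T^[k + 1] x) := by
  rcases n.eq_zero_or_pos with rfl | hn
  · simp [ergAvg]
  · rw [ergAvg, ← mul_assoc, mul_inv_cancel₀ (by positivity), one_mul]

theorem apply_iterate_succ_eq_ergAvg_sub (n : ℕ) (x : X) :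
    f (T^[n + 1] x) = ((n : ℝ) + 1) * ergAvg T f (n + 1) x - n * ergAvg T f n x := by
  rw [← Nat.cast_add_one, natCast_mul_ergAvg, natCast_mul_ergAvg, sum_range_succ]
  ring

variable [MeasurableSpace X] {μ : Measure X} {T f}

namespace MeasureTheory.MeasurePreserving

theorem integrable_ergAvg (hT : MeasurePreserving T μ μ) (hf : Integrable f μ)
    (n : ℕ) : Integrable (ergAvg T f n) μ :=
  (integrable_finsetSum _ fun k _ =>
    ((hT.iterate (k + 1)).integrable_comp hf.1).mpr hf).const_mul _

theorem integral_abs_comp_iterate (hT : MeasurePreserving T μ μ)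
    (hf : Integrable f μ) (k : ℕ) : ∫ x, |f (T^[k] x)| ∂μ = ∫ x, |f x| ∂μ := by
  have hmap := (hT.iterate k).map_eq
  have := integral_map (f := fun x => |f x|) (hT.iterate k).measurable.aemeasurable
    (hmap ▸ hf.abs.1)
  rwa [hmap, eq_comm] at this

theorem integral_abs_le_ergAvg (hT : MeasurePreserving T μ μ)
    (hf : Integrable f μ) (n : ℕ) :
    ∫ x, |f x| ∂μ ≤ ((n : ℝ) + 1) * ∫ x, |ergAvg T f (n + 1) x| ∂μ
      + n * ∫ x, |ergAvg T f n x| ∂μ := by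
  have hA := fun m => (hT.integrable_ergAvg hf m).abs
  rw [← hT.integral_abs_comp_iterate hf (n + 1), ← integral_const_mul, ← integral_const_mul,
    ← integral_add ((hA _).const_mul _) ((hA _).const_mul _)]
  refine integral_mono (((hT.iterate (n + 1)).integrable_comp hf.1).mpr hf).abs
    (((hA _).const_mul _).add ((hA _).const_mul _)) fun x => ?_
  calc |f (T^[n + 1] x)|
      ≤ |((n : ℝ) + 1) * ergAvg T f (n + 1) x| + |(n : ℝ) * ergAvg T f n x| := by
        rw [apply_iterate_succ_eq_ergAvg_sub T f n x]; exact abs_sub _ _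
    _ = _ := by simp only [abs_mul, Nat.abs_cast, abs_of_nonneg (by positivity : (0 : ℝ) ≤ n + 1)]

theorem integral_abs_div_succ_le (hT : MeasurePreserving T μ μ)
    (hf : Integrable f μ) (n : ℕ) :
    (∫ x, |f x| ∂μ) / ((n : ℝ) + 1)
      ≤ ∫ x, |ergAvg T f (n + 1) x| ∂μ + ∫ x, |ergAvg T f n x| ∂μ := by
  have h0 : 0 ≤ ∫ x, |ergAvg T f n x| ∂μ := integral_nonneg fun _ => abs_nonneg _
  rw [div_le_iff₀ (by positivity)]
  nlinarith [hT.integral_abs_le_ergAvg hf n]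

end MeasureTheory.MeasurePreserving

theorem integral_abs_pos_of_not_ae_eq_zero (hf : Integrable f μ) (hfne : ¬ f =ᵐ[μ] 0) :
    0 < ∫ x, |f x| ∂μ := by
  refine (integral_nonneg fun x => abs_nonneg (f x)).lt_of_ne fun h => hfne ?_
  filter_upwards [(integral_eq_zero_iff_of_nonneg (fun x => abs_nonneg (f x)) hf.abs).mp h.symm]
    with x hx
  simpa using hx
end

theorem stmt12_general
    {X : Type*} [MeasurableSpace X] (μ : Measure X)
    (T : X → X) (hT : MeasurePreserving T μ μ)
    (f : X → ℝ) (hf : Integrable f μ)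
    (hfne : ¬ f =ᵐ[μ] 0) :
    (¬ Summable (fun n : ℕ => ∫ x, |ergAvg T f (n + 1) x| ∂μ)) ∧
    (∀ N : ℕ, 1 ≤ N →
      ∑ n ∈ Finset.Icc 1 N, (∫ x, |f x| ∂μ) / ((n : ℝ) + 1)
        ≤ 3 * ∑ n ∈ Finset.Icc 1 (N + 1), ∫ x, |ergAvg T f n x| ∂μ) := by
  have hkey := hT.integral_abs_div_succ_le hf
  have hnonneg : ∀ n, 0 ≤ ∫ x, |ergAvg T f n x| ∂μ := fun n =>
    integral_nonneg fun _ => abs_nonneg _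
  refine ⟨not_summable_succ_of_div_succ_le (a := fun n => ∫ x, |ergAvg T f n x| ∂μ)
    (integral_abs_pos_of_not_ae_eq_zero hf hfne) hkey,
    fun N _ => ?_⟩
  have hsum : 0 ≤ ∑ n ∈ Icc 1 (N + 1), ∫ x, |ergAvg T f n x| ∂μ :=
    sum_nonneg fun n _ => hnonneg n
  linarith [sum_Icc_div_succ_le_two_mul_sum hnonneg hkey N]

/-- For a measure-preserving `T` on a probability space and a nonzero mean-zero
`f ∈ L¹(μ)`, the series `∑_n ‖M(0,n)^T f‖₁` diverges; in fact for every `N ≥ 1`,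
`∑_{n=1}^N ‖f‖₁/(n+1) ≤ 3 ∑_{n=1}^{N+1} ‖M(0,n)^T f‖₁`. -/
theorem stmt12
    {X : Type*} [MeasurableSpace X] (μ : Measure X) [IsProbabilityMeasure μ]
    (T : X → X) (hT : MeasurePreserving T μ μ)
    (f : X → ℝ) (hf : Integrable f μ) (hf0 : ∫ x, f x ∂μ = 0)
    (hfne : ¬ f =ᵐ[μ] 0) :
    (¬ Summable (fun n : ℕ => ∫ x, |ergAvg T f (n + 1) x| ∂μ)) ∧
    (∀ N : ℕ, 1 ≤ N →
      ∑ n ∈ Finset.Icc 1 N, (∫ x, |f x| ∂μ) / ((n : ℝ) + 1)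
        ≤ 3 * ∑ n ∈ Finset.Icc 1 (N + 1), ∫ x, |ergAvg T f n x| ∂μ) :=
  stmt12_general μ T hT f hf hfne
end

section
/- Let (X,B,μ) be a probability space, T an invertible ergodic measure-preserving transformation, and f ∈ L¹(μ). Suppose there is a sequence (g_n) of functions in L²(μ) such that Σ_{n=1}^∞ ‖f - (g_n - g_n∘T)‖₁ < ∞ and Σ_{n=1}^∞ ‖g_n‖₂²/n² < ∞. Then for every δ > 0, Σ_{n=1}^∞ μ{x : |A_n^T f(x)| ≥ δ} < ∞ where A_n^T f = (1/n) Σ_{k=1}^n f∘T^k; consequently, for every sequence of integers (v_n) and every strictly increasing sequence of positive integers (L_n), the moving averages M(v_n,L_n)^T f converge to 0 μ-almost everywhere. -/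
/-!
Write `f = r_n + (g_n - g_n ∘ T)`. The coboundary part of `A_{n+1} f` telescopes to
`(g_n ∘ T - g_n ∘ T^{n+2}) / (n+1)`, and each of these two terms exceeds `δ/3` only on a set of
measure `O(‖g_n‖₂² / (n+1)²)` by Chebyshev; the average of `r_n` exceeds `δ/3` only on a set of
measure `O(‖r_n‖₁)` by Markov, since `T` preserves `μ`. Summing over `n` gives the complete
convergence of `A_n f`. As `M(v,L) f = M(0,L) f ∘ T^v`, the exceptional sets of `M(v_n, L_n) f`
have the measures of those of `A_{L_n} f`, which are summable because the `L_n` are distinct;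
Borel–Cantelli then gives convergence almost everywhere.
-/

open MeasureTheory Filter
open scoped ENNReal Topology

section Algebra

variable {X : Type*} (T : Equiv.Perm X)

lemma movAvg_apply_zpow (f : X → ℝ) (u v : ℤ) (L : ℕ) (x : X) :
    movAvg T f u L ((T ^ v) x) = movAvg T f (u + v) L x := by
  unfold movAvg
  congr 1
  refine Finset.sum_congr rfl fun i _ => ?_
  rw [← Equiv.Perm.mul_apply, ← zpow_add]
  ring_nf

lemma movAvg_add (f g : X → ℝ) (v : ℤ) (L : ℕ) (x : X) :
    movAvg T (fun y => f y + g y) v L x = movAvg T f v L x + movAvg T g v L x := by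
  simp only [movAvg, Finset.sum_add_distrib, mul_add]

lemma abs_movAvg_le (f : X → ℝ) (v : ℤ) (L : ℕ) (x : X) :
    |movAvg T f v L x| ≤ movAvg T (fun y => |f y|) v L x := by
  rw [movAvg, movAvg, abs_mul, abs_of_nonneg (by positivity)]
  gcongr
  exact Finset.abs_sum_le_sum_abs _ _

lemma movAvg_coboundary (G : X → ℝ) (L : ℕ) (x : X) :
    movAvg T (fun y => G y - G (T y)) 0 L x = (L : ℝ)⁻¹ * (G (T x) - G ((T ^ (L + 1 : ℤ)) x)) := by
  set h : ℕ → ℝ := fun i => G ((T ^ ((i : ℤ) + 1)) x)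
  have hterm : ∀ i ∈ Finset.range L,
      G ((T ^ ((0 : ℤ) + 1 + i)) x) - G (T ((T ^ ((0 : ℤ) + 1 + i)) x)) = h i - h (i + 1) := by
    intro i _
    simp only [h, ← Equiv.Perm.mul_apply, ← zpow_one_add]
    push_cast; ring_nf
  rw [movAvg, Finset.sum_congr rfl hterm, Finset.sum_range_sub']
  simp [h]

lemma abs_movAvg_le_of_coboundary (f G : X → ℝ) (L : ℕ) (x : X) :
    |movAvg T f 0 L x| ≤ movAvg T (fun y => |f y - (G y - G (T y))|) 0 L x
      + (L : ℝ)⁻¹ * |G (T x)| + (L : ℝ)⁻¹ * |G ((T ^ (L + 1 : ℤ)) x)| := by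
  have hsplit : movAvg T f 0 L x = movAvg T (fun y => f y - (G y - G (T y))) 0 L x
      + (L : ℝ)⁻¹ * (G (T x) - G ((T ^ (L + 1 : ℤ)) x)) := by
    rw [← movAvg_coboundary, ← movAvg_add]
    simp only [sub_add_cancel]
  have hL : (0 : ℝ) ≤ (L : ℝ)⁻¹ := by positivity
  rw [hsplit]
  calc _ ≤ |movAvg T (fun y => f y - (G y - G (T y))) 0 L x|
        + |(L : ℝ)⁻¹ * (G (T x) - G ((T ^ (L + 1 : ℤ)) x))| := abs_add_le _ _
    _ ≤ _ := by
        rw [abs_mul, abs_of_nonneg hL, add_assoc, ← mul_add]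
        gcongr
        · exact abs_movAvg_le _ _ _ _ _
        · exact abs_sub _ _

end Algebra

section Measure

variable {X : Type*} [MeasurableSpace X] {μ : Measure X} {T : Equiv.Perm X}

lemma measurable_perm_zpow (hT : Measurable T) (hT' : Measurable T.symm) :
    ∀ k : ℤ, Measurable ⇑(T ^ k)
  | (n : ℕ) => by rw [zpow_natCast, Equiv.Perm.coe_pow]; exact hT.iterate n
  | .negSucc n => by
      rw [zpow_negSucc, ← inv_pow, Equiv.Perm.coe_pow, Equiv.Perm.inv_def]
      exact hT'.iterate (n + 1)

lemma measurableEmbedding_perm_zpow (hT : Measurable T) (hT' : Measurable T.symm) (k : ℤ) :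
    MeasurableEmbedding ⇑(T ^ k) :=
  (MeasurableEquiv.mk (T ^ k) (measurable_perm_zpow hT hT' k) (by
    rw [← Equiv.Perm.inv_def, ← zpow_neg]
    exact measurable_perm_zpow hT hT' (-k))).measurableEmbedding

lemma measurePreserving_perm_zpow (hT : MeasurePreserving T μ μ) (hT' : Measurable T.symm) :
    ∀ k : ℤ, MeasurePreserving ⇑(T ^ k) μ μ
  | (n : ℕ) => by rw [zpow_natCast, Equiv.Perm.coe_pow]; exact hT.iterate n
  | .negSucc n => by
      rw [zpow_negSucc, ← inv_pow, Equiv.Perm.coe_pow, Equiv.Perm.inv_def]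
      exact (hT.symm ⟨T, hT.measurable, hT'⟩).iterate (n + 1)

lemma meas_ge_le_ofReal_integral_div [IsFiniteMeasure μ] {h : X → ℝ} (hh : Integrable h μ)
    (h0 : 0 ≤ᵐ[μ] h) {ε : ℝ} (hε : 0 < ε) :
    μ {x | ε ≤ h x} ≤ ENNReal.ofReal ((∫ x, h x ∂μ) / ε) := by
  rw [← ofReal_measureReal]
  exact ENNReal.ofReal_le_ofReal ((le_div_iff₀' hε).2 (mul_meas_ge_le_integral_of_nonneg h0 hh ε))

lemma meas_ge_mul_abs_comp_le [IsFiniteMeasure μ] {φ : X → X} (hφ : MeasurePreserving φ μ μ)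
    (hφe : MeasurableEmbedding φ) {G : X → ℝ} (hG : MemLp G 2 μ) {ε : ℝ} (hε : 0 < ε) (c : ℝ) :
    μ {x | ε ≤ c * |G (φ x)|} ≤ ENNReal.ofReal (c ^ 2 * (∫ x, G x ^ 2 ∂μ) / ε ^ 2) :=
  calc μ {x | ε ≤ c * |G (φ x)|} ≤ μ {x | ε ^ 2 ≤ c ^ 2 * G (φ x) ^ 2} :=
        measure_mono fun x (hx : ε ≤ c * |G (φ x)|) => show ε ^ 2 ≤ _ by
          simpa only [mul_pow, sq_abs] using pow_le_pow_left₀ hε.le hx 2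
    _ ≤ ENNReal.ofReal ((∫ x, c ^ 2 * G (φ x) ^ 2 ∂μ) / ε ^ 2) :=
        meas_ge_le_ofReal_integral_div
          ((hφ.integrable_comp_of_integrable hG.integrable_sq).const_mul _)
          (ae_of_all _ fun _ => mul_nonneg (sq_nonneg c) (sq_nonneg _)) (pow_pos hε 2)
    _ = _ := by rw [integral_const_mul, hφ.integral_comp hφe (fun y => G y ^ 2)]

lemma ae_tendsto_zero_of_tsum_meas_ge_ne_top {F : ℕ → X → ℝ}
    (h : ∀ δ : ℝ, 0 < δ → ∑' n, μ {x | δ ≤ |F n x|} ≠ ∞) :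
    ∀ᵐ x ∂μ, Tendsto (fun n => F n x) atTop (𝓝 0) := by
  have hk : ∀ᵐ x ∂μ, ∀ k : ℕ, ∀ᶠ n in atTop, |F n x| < 1 / ((k : ℝ) + 1) :=
    ae_all_iff.2 fun k => by
      filter_upwards [ae_eventually_notMem (h (1 / ((k : ℝ) + 1)) (by positivity))] with x hx
      exact hx.mono fun n hn => not_le.1 hn
  filter_upwards [hk] with x hx
  refine Metric.tendsto_nhds.2 fun ε hε => ?_
  obtain ⟨k, hkε⟩ := exists_nat_one_div_lt hε
  exact (hx k).mono fun n hn => by rw [Real.dist_eq, sub_zero]; exact hn.trans hkε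

end Measure

section MovingAverage

variable {X : Type*} [MeasurableSpace X] {μ : Measure X} {T : Equiv.Perm X}

lemma integrable_movAvg (hT : MeasurePreserving T μ μ) (hT' : Measurable T.symm) {f : X → ℝ}
    (hf : Integrable f μ) (v : ℤ) (L : ℕ) :
    Integrable (movAvg T f v L) μ :=
  (integrable_finsetSum _ fun _ _ =>
    (measurePreserving_perm_zpow hT hT' _).integrable_comp_of_integrable hf).const_mul _

lemma integral_movAvg (hT : MeasurePreserving T μ μ) (hT' : Measurable T.symm) {f : X → ℝ}
    (hf : Integrable f μ) (v : ℤ) {L : ℕ} (hL : L ≠ 0) :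
    ∫ x, movAvg T f v L x ∂μ = ∫ x, f x ∂μ := by
  have hcomp (k : ℤ) : Integrable (fun x => f ((T ^ k) x)) μ :=
    (measurePreserving_perm_zpow hT hT' k).integrable_comp_of_integrable hf
  simp only [movAvg]
  rw [integral_const_mul, integral_finsetSum _ fun _ _ => hcomp _,
    Finset.sum_congr rfl fun i _ => (measurePreserving_perm_zpow hT hT' _).integral_comp
    (measurableEmbedding_perm_zpow hT.measurable hT' _) f]
  simp [hL]

lemma meas_ge_abs_movAvg_eq (hT : MeasurePreserving T μ μ) (hT' : Measurable T.symm)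
    (f : X → ℝ) (δ : ℝ) (v : ℤ) (L : ℕ) :
    μ {x | δ ≤ |movAvg T f v L x|} = μ {x | δ ≤ |movAvg T f 0 L x|} := by
  rw [← (measurePreserving_perm_zpow hT hT' v).measure_preimage_emb
    (measurableEmbedding_perm_zpow hT.measurable hT' v) {x | δ ≤ |movAvg T f 0 L x|}]
  simp only [Set.preimage_ofPred_eq, movAvg_apply_zpow, zero_add]

lemma meas_ge_abs_movAvg_le [IsFiniteMeasure μ] (hT : MeasurePreserving T μ μ)
    (hT' : Measurable T.symm) {f G : X → ℝ} (hf : Integrable f μ) (hG : MemLp G 2 μ) {δ : ℝ}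
    (hδ : 0 < δ) {L : ℕ} (hL : L ≠ 0) :
    μ {x | δ ≤ |movAvg T f 0 L x|} ≤ ENNReal.ofReal (3 / δ * ∫ x, |f x - (G x - G (T x))| ∂μ
      + 2 * ((3 / δ) ^ 2 * ((∫ x, G x ^ 2 ∂μ) / (L : ℝ) ^ 2))) := by
  set r : X → ℝ := fun y => f y - (G y - G (T y))
  have hr : Integrable (fun y => |r y|) μ :=
    (hf.sub ((hG.integrable one_le_two).sub
      (hT.integrable_comp_of_integrable (hG.integrable one_le_two)))).abs
  have hδ3 : 0 < δ / 3 := by positivity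
  have hsub : {x | δ ≤ |movAvg T f 0 L x|} ⊆ {x | δ / 3 ≤ movAvg T (fun y => |r y|) 0 L x}
      ∪ {x | δ / 3 ≤ (L : ℝ)⁻¹ * |G (T x)|}
      ∪ {x | δ / 3 ≤ (L : ℝ)⁻¹ * |G ((T ^ (L + 1 : ℤ)) x)|} := by
    intro x (hx : δ ≤ _)
    by_contra hc
    simp only [Set.mem_union, Set.mem_ofPred_eq, not_or, not_le] at hc
    linarith [abs_movAvg_le_of_coboundary T f G L x]
  have hr_avg : μ {x | δ / 3 ≤ movAvg T (fun y => |r y|) 0 L x}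
      ≤ ENNReal.ofReal (3 / δ * ∫ x, |r x| ∂μ) := by
    have := meas_ge_le_ofReal_integral_div (integrable_movAvg hT hT' hr 0 L)
      (ae_of_all _ fun x => (abs_nonneg _).trans (abs_movAvg_le T r 0 L x)) hδ3
    rw [integral_movAvg hT hT' hr 0 hL] at this
    convert this using 2
    ring
  have hG_first := meas_ge_mul_abs_comp_le hT
    (⟨T, hT.measurable, hT'⟩ : X ≃ᵐ X).measurableEmbedding hG hδ3 (L : ℝ)⁻¹
  have hG_last := meas_ge_mul_abs_comp_le (measurePreserving_perm_zpow hT hT' _)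
    (measurableEmbedding_perm_zpow hT.measurable hT' (L + 1)) hG hδ3 (L : ℝ)⁻¹
  have hb : (L : ℝ)⁻¹ ^ 2 * (∫ x, G x ^ 2 ∂μ) / (δ / 3) ^ 2
      = (3 / δ) ^ 2 * ((∫ x, G x ^ 2 ∂μ) / (L : ℝ) ^ 2) := by
    field_simp
  rw [hb] at hG_first hG_last
  calc μ {x | δ ≤ |movAvg T f 0 L x|}
      ≤ μ {x | δ / 3 ≤ movAvg T (fun y => |r y|) 0 L x}
        + μ {x | δ / 3 ≤ (L : ℝ)⁻¹ * |G (T x)|}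
        + μ {x | δ / 3 ≤ (L : ℝ)⁻¹ * |G ((T ^ (L + 1 : ℤ)) x)|} :=
        (measure_mono hsub).trans ((measure_union_le _ _).trans
          (add_le_add_left (measure_union_le _ _) _))
    _ ≤ _ := by grw [hr_avg, hG_first, hG_last]
    _ = _ := by
        rw [two_mul, ← add_assoc, ENNReal.ofReal_add (by positivity) (by positivity),
          ENNReal.ofReal_add (by positivity) (by positivity)]

lemma tsum_meas_ge_abs_movAvg_lt_top [IsFiniteMeasure μ] (hT : MeasurePreserving T μ μ)
    (hT' : Measurable T.symm) {f : X → ℝ} (hf : Integrable f μ) {g : ℕ → X → ℝ}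
    (hg : ∀ n, MemLp (g n) 2 μ)
    (happrox : Summable (fun n : ℕ => ∫ x, |f x - (g n x - g n (T x))| ∂μ))
    (hgrowth : Summable (fun n : ℕ => (∫ x, (g n x) ^ 2 ∂μ) / ((n : ℝ) + 1) ^ 2))
    {δ : ℝ} (hδ : 0 < δ) :
    ∑' n : ℕ, μ {x | δ ≤ |movAvg T f 0 (n + 1) x|} < ∞ := by
  set c : ℕ → ℝ := fun n => 3 / δ * ∫ x, |f x - (g n x - g n (T x))| ∂μ
      + 2 * ((3 / δ) ^ 2 * ((∫ x, g n x ^ 2 ∂μ) / ((n : ℝ) + 1) ^ 2))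
  have hc : Summable c := (happrox.mul_left _).add ((hgrowth.mul_left _).mul_left 2)
  have hc0 (n : ℕ) : 0 ≤ c n := by
    have : 0 ≤ ∫ x, |f x - (g n x - g n (T x))| ∂μ := integral_nonneg fun x => abs_nonneg _
    have : 0 ≤ ∫ x, g n x ^ 2 ∂μ := integral_nonneg fun x => sq_nonneg _
    positivity
  calc ∑' n : ℕ, μ {x | δ ≤ |movAvg T f 0 (n + 1) x|}
      ≤ ∑' n, ENNReal.ofReal (c n) := ENNReal.tsum_le_tsum fun n => by
        have := meas_ge_abs_movAvg_le hT hT' hf (hg n) hδ n.succ_ne_zero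
        push_cast at this
        exact this
    _ = ENNReal.ofReal (∑' n, c n) := (ENNReal.ofReal_tsum_of_nonneg hc0 hc).symm
    _ < ∞ := ENNReal.ofReal_lt_top

end MovingAverage

theorem stmt13_general
    {X : Type*} [MeasurableSpace X] (μ : Measure X) [IsProbabilityMeasure μ]
    (T : Equiv.Perm X) (hT' : Measurable (⇑T.symm))
    (hTerg : Ergodic (⇑T) μ)
    (f : X → ℝ) (hf : Integrable f μ)
    (g : ℕ → X → ℝ) (hg : ∀ n, MemLp (g n) 2 μ)
    (happrox : Summable (fun n : ℕ => ∫ x, |f x - (g n x - g n (T x))| ∂μ))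
    (hgrowth : Summable (fun n : ℕ => (∫ x, (g n x) ^ 2 ∂μ) / ((n : ℝ) + 1) ^ 2)) :
    (∀ δ : ℝ, 0 < δ →
      (∑' n : ℕ, μ {x | δ ≤ |movAvg T f 0 (n + 1) x|}) < ⊤) ∧
    (∀ (v : ℕ → ℤ) (L : ℕ → ℕ), (∀ n, 0 < L n) → StrictMono L →
      ∀ᵐ x ∂μ, Tendsto (fun n => movAvg T f (v n) (L n) x) atTop (nhds 0)) := by
  have hT : MeasurePreserving T μ μ := hTerg.toMeasurePreserving
  have hcomplete (δ : ℝ) (hδ : 0 < δ) :=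
    tsum_meas_ge_abs_movAvg_lt_top hT hT' hf hg happrox hgrowth hδ
  refine ⟨hcomplete, fun v L hLpos hL => ae_tendsto_zero_of_tsum_meas_ge_ne_top fun δ hδ => ?_⟩
  have hreindex (n : ℕ) : μ {x | δ ≤ |movAvg T f (v n) (L n) x|}
      = μ {x | δ ≤ |movAvg T f 0 (L n - 1 + 1) x|} := by
    rw [Nat.sub_add_cancel (hLpos n), meas_ge_abs_movAvg_eq hT hT']
  have hinj : Function.Injective fun n => L n - 1 := fun a b hab => by
    have := hLpos a; have := hLpos b
    exact hL.injective (by simp only at hab; omega)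
  rw [tsum_congr hreindex]
  exact ((ENNReal.tsum_comp_le_tsum_of_injective hinj
    fun m => μ {x | δ ≤ |movAvg T f 0 (m + 1) x|}).trans_lt (hcomplete δ hδ)).ne

/-- Suppose `f ∈ L¹(μ)` is approximated by coboundaries `g_n - g_n∘T` with
`∑_n ‖f - (g_n - g_n∘T)‖₁ < ∞` and `∑_n ‖g_n‖₂²/n² < ∞` (indices `n ≥ 1`). Then the
ergodic averages `A_n^T f = M(0,n)^T f` converge completely to `0`, and consequently every
moving average `M(v_n, L_n)^T f` with `(L_n)` strictly increasing positive converges a.e.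
to `0`. -/
theorem stmt13
    {X : Type*} [MeasurableSpace X] (μ : Measure X) [IsProbabilityMeasure μ]
    (T : Equiv.Perm X) (hT : Measurable (⇑T)) (hT' : Measurable (⇑T.symm))
    (hTerg : Ergodic (⇑T) μ)
    (f : X → ℝ) (hf : Integrable f μ)
    (g : ℕ → X → ℝ) (hg : ∀ n, MemLp (g n) 2 μ)
    (happrox : Summable (fun n : ℕ => ∫ x, |f x - (g n x - g n (T x))| ∂μ))
    (hgrowth : Summable (fun n : ℕ => (∫ x, (g n x) ^ 2 ∂μ) / ((n : ℝ) + 1) ^ 2)) :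
    (∀ δ : ℝ, 0 < δ →
      (∑' n : ℕ, μ {x | δ ≤ |movAvg T f 0 (n + 1) x|}) < ⊤) ∧
    (∀ (v : ℕ → ℤ) (L : ℕ → ℕ), (∀ n, 0 < L n) → StrictMono L →
      ∀ᵐ x ∂μ, Tendsto (fun n => movAvg T f (v n) (L n) x) atTop (nhds 0)) :=
  stmt13_general μ T hT' hTerg f hf g hg happrox hgrowth
end

section
/- Let p > 1 be real, (X,B,μ) a standard non-atomic probability space, and T an invertible ergodic measure-preserving transformation. Let f ∈ F_p: that is, there are reals a_n > 2 with superpolynomial growth (a_n/n^d → ∞ for every d > 0) and a_n^p μ(A_n) → ∞, pairwise disjoint measurable sets A_n of positive measure with Σ_n a_n μ(A_n) ≤ 1/2, and a measurable set B disjoint from ∪_n A_n with μ(B) = Σ_n a_n μ(A_n), such that f = a_n on A_n, f = -1 on B, and f = 0 elsewhere. Suppose there exists η with 0 < η < 1 such that for each n ∈ ℤ⁺ there is a measurable set B_n with μ(B_n) > η a_n μ(A_n) and for each x ∈ B_n there is an integer ℓ_x > η a_n with Σ_{i=0}^{ℓ_x-1} f(T^i x) > η ℓ_x. Then there exist a sequence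 of integers (v_n) and a sequence of positive integers (L_n) with L_n ≥ n^{1/(p-1)} for all n such that for μ-almost every x ∈ X, limsup_{n→∞} (1/L_n) Σ_{i=v_n+1}^{v_n+L_n} f(T^i x) > 0. -/
/-!
Write `G_L = {y | ∑_{i<L} f (T^i y) ≥ η L / 2}`. A point of `B_n` starts an ergodic sum of some
length `ℓ ∈ [2^j η a_n, 2^{j+1} η a_n)` with average `> η`. Cutting it into blocks of length
`L ≈ 2^j η² a_n / 6` and using `f ≥ -1`, one of the first `⌊24/η⌋ + 1` blocks has average
`≥ η/2`, so that dyadic class of `B_n` lies in `⌊24/η⌋ + 1` translates of `G_L`. Since the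
classes have measures summing to more than `η a_n μ(A_n)`, one of them has measure
`≳ 2^{-j(p-1)} a_n μ(A_n)`, and for its `L` this gives `L^{p-1} μ(G_L) ≳ a_n^p μ(A_n) → ∞`.

By the mean ergodic theorem in `L²`, every measurable `E` meets some `T^{-u} G_L` in measure
at least `μ(G_L) μ(E) / 2`. Hence `O(r / μ(G_L))` translates of `G_L`, chosen greedily, cover
`X` up to measure `2^{-r}`, and the bound on `L^{p-1} μ(G_L)` lets all of them carry indices
`n ≤ L^{p-1}`. Concatenating these finite families over `r` gives `(v_n, L_n)`; by
Borel–Cantelli almost every `x` lies in one of the translates of the `r`-th family for all large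
`r`, so infinitely many averages are `≥ η/2`.
-/

open MeasureTheory Filter Topology

section BirkhoffSum

variable {α : Type*} (T : α → α)

theorem birkhoffSum_mul_eq_sum {M : Type*} [AddCommMonoid M] (g : α → M) (q L : ℕ) (x : α) :
    birkhoffSum T g (q * L) x = ∑ k ∈ Finset.range q, birkhoffSum T g L (T^[k * L] x) := by
  induction q with
  | zero => simp
  | succ q ih => rw [Finset.sum_range_succ, ← ih, add_mul, one_mul, birkhoffSum_add]

variable {T} {f : α → ℝ}

theorem neg_le_birkhoffSum (hf : ∀ x, -1 ≤ f x) (n : ℕ) (x : α) :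
    -(n : ℝ) ≤ birkhoffSum T f n x := by
  simpa [birkhoffSum] using
    Finset.card_nsmul_le_sum (Finset.range n) _ (-1) fun i _ => hf (T^[i] x)

theorem exists_birkhoffSum_block_ge (hf : ∀ x, -1 ≤ f x) {η : ℝ} (hη : η ≤ 1) {ℓ L : ℕ}
    (hL : 0 < L) (h3L : 3 * (L : ℝ) ≤ η * ℓ) {x : α} (hx : η * ℓ < birkhoffSum T f ℓ x) :
    ∃ k : ℕ, k * L ≤ ℓ ∧ η / 2 * L ≤ birkhoffSum T f L (T^[k * L] x) := by
  by_contra! hbad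
  set q := ℓ / L + 1
  have hqL : q * L = ℓ + (q * L - ℓ) := by
    have := Nat.lt_div_mul_add (a := ℓ) hL
    simp only [q, add_mul, one_mul]; omega
  have hext : q * L - ℓ ≤ L := by
    have := Nat.div_mul_le_self ℓ L
    simp only [q, add_mul, one_mul]; omega
  have hlow : η * ℓ - L < birkhoffSum T f (q * L) x := by
    rw [hqL, birkhoffSum_add]
    have := neg_le_birkhoffSum (T := T) hf (q * L - ℓ) (T^[ℓ] x)
    have : ((q * L - ℓ : ℕ) : ℝ) ≤ L := by exact_mod_cast hext
    linarith
  have hup : birkhoffSum T f (q * L) x ≤ q * (η / 2 * L) := by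
    rw [birkhoffSum_mul_eq_sum]
    calc ∑ k ∈ Finset.range q, birkhoffSum T f L (T^[k * L] x)
        ≤ ∑ _k ∈ Finset.range q, η / 2 * L := Finset.sum_le_sum fun k hk => (hbad k
          ((Nat.mul_le_mul_right L (Nat.lt_succ_iff.1 (Finset.mem_range.1 hk))).trans
            (Nat.div_mul_le_self ℓ L))).le
      _ = q * (η / 2 * L) := by simp
  have hqL' : (q : ℝ) * L ≤ ℓ + L := by
    have : q * L ≤ ℓ + L := by omega
    exact_mod_cast this
  have hη0 : 0 ≤ η := by
    by_contra! h
    nlinarith [(Nat.cast_nonneg ℓ : (0 : ℝ) ≤ ℓ), (Nat.cast_pos.2 hL : (0 : ℝ) < L)]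
  nlinarith

end BirkhoffSum

theorem Measurable.birkhoffSum {α M : Type*} [MeasurableSpace α] [MeasurableSpace M]
    [AddCommMonoid M] [MeasurableAdd₂ M] {T : α → α} {g : α → M} (hg : Measurable g)
    (hT : Measurable T) (n : ℕ) : Measurable (birkhoffSum T g n) :=
  Finset.measurable_fun_sum _ fun k _ => hg.comp (hT.iterate k)

theorem Equiv.Perm.sum_range_zpow_add_eq_birkhoffSum {X M : Type*} [AddCommMonoid M]
    (T : Equiv.Perm X) (g : X → M) (v : ℤ) (L : ℕ) (x : X) :
    ∑ i ∈ Finset.range L, g ((T ^ (v + 1 + (i : ℤ))) x) = birkhoffSum T g L ((T ^ (v + 1)) x) := by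
  refine Finset.sum_congr rfl fun i _ => ?_
  rw [add_comm, zpow_add, zpow_natCast, Equiv.Perm.mul_apply, Equiv.Perm.coe_pow]

theorem one_sub_half_pow_le_inv_two_pow {δ : ℝ} (hδ : δ ≤ 2) {N r : ℕ}
    (hN : 2 * r ≤ N * δ) : (1 - δ / 2) ^ N ≤ 2⁻¹ ^ r :=
  calc (1 - δ / 2) ^ N ≤ Real.exp (-(δ / 2)) ^ N := by
        gcongr
        · linarith
        · linarith [Real.add_one_le_exp (-(δ / 2))]
    _ = Real.exp (-1) ^ ((N * δ) / 2) := by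
        rw [← Real.exp_nat_mul, ← Real.exp_mul]; ring_nf
    _ ≤ Real.exp (-1) ^ (r : ℝ) := by
        apply Real.rpow_le_rpow_of_exponent_ge (Real.exp_pos _)
          (Real.exp_le_one_iff.2 (by norm_num))
        linarith
    _ ≤ 2⁻¹ ^ r := by
        rw [Real.rpow_natCast]
        gcongr
        linarith [Real.exp_neg_one_lt_half]

theorem exists_two_pow_mul_le_lt {r x : ℝ} (hr : 0 < r) (hx : r ≤ x) :
    ∃ j : ℕ, 2 ^ j * r ≤ x ∧ x < 2 * (2 ^ j * r) := by
  obtain ⟨j, hj, hj'⟩ := exists_nat_pow_near ((one_le_div hr).2 hx) one_lt_two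
  rw [le_div_iff₀ hr] at hj
  rw [div_lt_iff₀ hr, pow_succ] at hj'
  exact ⟨j, hj, by linarith⟩

theorem rpow_two_pow_mul_mul_inv_rpow_pow {p c a : ℝ} (hc : 0 ≤ c) (ha : 0 < a) (j : ℕ) :
    (2 ^ j * (c * a)) ^ (p - 1) * ((2 : ℝ) ^ (p - 1))⁻¹ ^ j * a = c ^ (p - 1) * a ^ p := by
  rw [Real.mul_rpow (by positivity) (by positivity), Real.mul_rpow hc ha.le, ← Real.rpow_natCast,
    ← Real.rpow_mul zero_le_two, mul_comm (j : ℝ), Real.rpow_mul zero_le_two, Real.rpow_natCast]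
  calc (2 ^ (p - 1)) ^ j * (c ^ (p - 1) * a ^ (p - 1)) * ((2 : ℝ) ^ (p - 1))⁻¹ ^ j * a
      = ((2 ^ (p - 1)) ^ j * ((2 : ℝ) ^ (p - 1))⁻¹ ^ j) * c ^ (p - 1) * (a ^ (p - 1) * a) := by
        ring
    _ = c ^ (p - 1) * a ^ p := by
        rw [← mul_pow, mul_inv_cancel₀ (by positivity), one_pow, one_mul,
          ← Real.rpow_add_one ha.ne', sub_add_cancel]

theorem tendsto_atTop_of_tendsto_rpow_mul_atTop {ι : Type*} {l : Filter ι} {a m : ι → ℝ} {p : ℝ}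
    (hp : 0 < p) (ha : ∀ i, 0 ≤ a i) (hm : ∀ i, m i ≤ 1)
    (h : Tendsto (fun i => a i ^ p * m i) l atTop) : Tendsto a l atTop := by
  have hap : Tendsto (fun i => a i ^ p) l atTop :=
    tendsto_atTop_mono (fun i => mul_le_of_le_one_right (by have := ha i; positivity) (hm i)) h
  exact ((tendsto_rpow_atTop (inv_pos.2 hp)).comp hap).congr fun i =>
    Real.rpow_rpow_inv (ha i) hp.ne'

namespace Ergodic

variable {X : Type*} [MeasurableSpace X] {μ : Measure X} [IsProbabilityMeasure μ] {T : X → X}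

theorem exists_tendsto_average_measureReal_preimage_inter (hT : Ergodic T μ) {H : Set X}
    (hH : MeasurableSet H) : ∃ c : ℝ, ∀ E : Set X, MeasurableSet E →
      Tendsto (fun N : ℕ => (N : ℝ)⁻¹ * ∑ k ∈ Finset.range N, μ.real (T^[k] ⁻¹' H ∩ E))
        atTop (𝓝 (c * μ.real E)) := by
  let U : Lp ℝ 2 μ →L[ℝ] Lp ℝ 2 μ :=
    (Lp.compMeasurePreservingₗᵢ ℝ T hT.toMeasurePreserving).toContinuousLinearMap
  let φ : Lp ℝ 2 μ := indicatorConstLp 2 hH (measure_ne_top μ H) 1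
  -- the `L²` limit `Q` of the Birkhoff averages of `1_H` is `U`-invariant, hence a.e. constant
  obtain ⟨Q, hQ, hQlim⟩ : ∃ Q ∈ (U : Lp ℝ 2 μ →ₗ[ℝ] Lp ℝ 2 μ).eqLocus 1,
      Tendsto (birkhoffAverage ℝ U id · φ) atTop (𝓝 Q) :=
    ⟨_, SetLike.coe_mem _, U.tendsto_birkhoffAverage_orthogonalProjection
        (LinearIsometry.norm_toContinuousLinearMap_le _) φ⟩
  obtain ⟨c, hc⟩ := hT.eq_const_of_compMeasurePreserving_eq (g := (Q : Lp ℝ 2 μ).1)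
    (congrArg Subtype.val hQ)
  have hU_iter (k : ℕ) : (⇑U)^[k] φ = indicatorConstLp 2
      (hH.preimage (hT.toMeasurePreserving.iterate k).measurable) (measure_ne_top μ _) 1 :=
    congrFun (Lp.compMeasurePreserving_iterate hT.toMeasurePreserving k) φ
  refine ⟨c, fun E hE => ?_⟩
  let ψ : Lp ℝ 2 μ := indicatorConstLp 2 hE (measure_ne_top μ E) 1
  have hlim := (tendsto_const_nhds (x := ψ)).inner (𝕜 := ℝ) hQlim
  have hψQ : inner ℝ ψ (Q : Lp ℝ 2 μ) = c * μ.real E := by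
    rw [L2.inner_indicatorConstLp_one, setIntegral_congr_ae hE ?_, setIntegral_const,
      smul_eq_mul, mul_comm]
    have hQc : ⇑Q =ᵐ[μ] fun _ => c := by
      rw [show ⇑Q = ⇑(Q : X →ₘ[μ] ℝ) from rfl, hc]
      exact AEEqFun.coeFn_const X c
    filter_upwards [hQc] with x hx _ using hx
  rw [← hψQ]
  refine hlim.congr fun N => ?_
  simp only [birkhoffAverage, birkhoffSum, inner_smul_right, inner_sum, id, hU_iter, ψ,
    L2.inner_indicatorConstLp_indicatorConstLp, Set.inter_comm E]
  simp

theorem tendsto_average_measureReal_preimage_inter (hT : Ergodic T μ) {H E : Set X}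
    (hH : MeasurableSet H) (hE : MeasurableSet E) :
    Tendsto (fun N : ℕ => (N : ℝ)⁻¹ * ∑ k ∈ Finset.range N, μ.real (T^[k] ⁻¹' H ∩ E))
      atTop (𝓝 (μ.real H * μ.real E)) := by
  obtain ⟨c, hc⟩ := hT.exists_tendsto_average_measureReal_preimage_inter hH
  suffices c = μ.real H by simpa [this] using hc E hE
  have hconst : ∀ᶠ N : ℕ in atTop,
      (N : ℝ)⁻¹ * ∑ k ∈ Finset.range N, μ.real (T^[k] ⁻¹' H ∩ Set.univ) = μ.real H := by
    filter_upwards [eventually_ne_atTop 0] with N hN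
    simp [(hT.toMeasurePreserving.iterate _).measureReal_preimage hH.nullMeasurableSet, hN]
  simpa using tendsto_nhds_unique (hc Set.univ MeasurableSet.univ)
    (tendsto_const_nhds.congr' (hconst.mono fun _ h => h.symm))

theorem exists_measureReal_inter_preimage_ge (hT : Ergodic T μ) {H E : Set X}
    (hH : MeasurableSet H) (hE : MeasurableSet E) :
    ∃ u : ℕ, μ.real H * μ.real E / 2 ≤ μ.real (E ∩ T^[u] ⁻¹' H) := by
  by_contra! hsmall
  have hle : μ.real H * μ.real E ≤ μ.real H * μ.real E / 2 := by
    refine le_of_tendsto (hT.tendsto_average_measureReal_preimage_inter hH hE) ?_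
    filter_upwards [eventually_ne_atTop 0] with N hN
    rw [inv_mul_le_iff₀ (by positivity)]
    calc ∑ k ∈ Finset.range N, μ.real (T^[k] ⁻¹' H ∩ E)
        ≤ ∑ _k ∈ Finset.range N, μ.real H * μ.real E / 2 :=
          Finset.sum_le_sum fun k _ => by rw [Set.inter_comm]; exact (hsmall k).le
      _ = N * (μ.real H * μ.real E / 2) := by simp
  linarith [hsmall 0, measureReal_nonneg (μ := μ) (s := E ∩ T^[0] ⁻¹' H)]

theorem exists_iterate_preimage_cover (hT : Ergodic T μ) {H : Set X} (hH : MeasurableSet H)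
    (N : ℕ) : ∃ u : ℕ → ℕ,
      μ.real (⋃ i ∈ Finset.range N, T^[u i] ⁻¹' H)ᶜ ≤ (1 - μ.real H / 2) ^ N := by
  induction N with
  | zero => exact ⟨0, by simp⟩
  | succ N ih =>
    obtain ⟨u, hu⟩ := ih
    have hpre (k : ℕ) : MeasurableSet (T^[k] ⁻¹' H) :=
      hH.preimage (hT.toMeasurePreserving.iterate k).measurable
    set E := (⋃ i ∈ Finset.range N, T^[u i] ⁻¹' H)ᶜ
    have hE : MeasurableSet E := (Finset.measurableSet_biUnion _ fun i _ => hpre (u i)).compl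
    obtain ⟨w, hw⟩ := hT.exists_measureReal_inter_preimage_ge hH hE
    refine ⟨Function.update u N w, ?_⟩
    have hunion : (⋃ i ∈ Finset.range (N + 1), T^[Function.update u N w i] ⁻¹' H)ᶜ
        = E \ T^[w] ⁻¹' H := by
      rw [Finset.range_add_one, Finset.set_biUnion_insert, Function.update_self,
        Set.compl_union, Set.sdiff_eq, Set.inter_comm]
      congr 2
      refine Set.iUnion₂_congr fun i hi => ?_
      rw [Function.update_of_ne (Finset.mem_range.1 hi).ne]
    have hsplit := measureReal_inter_add_sdiff (μ := μ) (s := E) (hpre w)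
    have hH1 : μ.real H ≤ 2 := measureReal_le_one.trans one_le_two
    rw [hunion, pow_succ]
    nlinarith [measureReal_nonneg (μ := μ) (s := E)]

theorem exists_iterate_preimage_cover_le_inv_two_pow (hT : Ergodic T μ) {H : Set X}
    (hH : MeasurableSet H) (hpos : 0 < μ.real H) (r : ℕ) :
    ∃ N : ℕ, 0 < N ∧ N * μ.real H ≤ 2 * r + 2 ∧ ∃ u : ℕ → ℕ,
      μ.real (⋃ i ∈ Finset.range N, T^[u i] ⁻¹' H)ᶜ ≤ 2⁻¹ ^ r := by
  set N := ⌈(2 * r + 1) / μ.real H⌉₊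
  have hN : 2 * r + 1 ≤ N * μ.real H := (div_le_iff₀ hpos).1 (Nat.le_ceil _)
  obtain ⟨u, hu⟩ := hT.exists_iterate_preimage_cover hH N
  refine ⟨N, Nat.ceil_pos.2 (by positivity), ?_, u,
    hu.trans (one_sub_half_pow_le_inv_two_pow (measureReal_le_one.trans one_le_two) (by linarith))⟩
  have hN' := mul_lt_mul_of_pos_right
    (Nat.ceil_lt_add_one (div_nonneg (by positivity : (0 : ℝ) ≤ 2 * r + 1) hpos.le)) hpos
  rw [add_mul, div_mul_cancel₀ _ hpos.ne', one_mul] at hN'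
  linarith [measureReal_le_one (μ := μ) (s := H)]

theorem exists_shifts_lengths_cover (hT : Ergodic T μ) {q : ℝ} {G : ℕ → Set X}
    (hG : ∀ L, MeasurableSet (G L))
    (hlarge : ∀ M : ℝ, ∃ L : ℕ, 0 < L ∧ M ≤ L ^ q * μ.real (G L)) (r m : ℕ) :
    ∃ N, 0 < N ∧ ∃ w : ℕ → ℕ × ℕ, (∀ i < N, 0 < (w i).2 ∧ ((m + i : ℕ) : ℝ) ≤ (w i).2 ^ q) ∧
      μ (⋃ i ∈ Finset.range N, T^[(w i).1] ⁻¹' G (w i).2)ᶜ ≤ 2⁻¹ ^ r := by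
  -- room for the `N ≤ (2 r + 2) / μ (G L)` translates at the indices `m, …, m + N - 1`
  obtain ⟨L, hL, hLG⟩ := hlarge (m + 2 * r + 2)
  have hLq : 0 ≤ (L : ℝ) ^ q := by positivity
  have hpos : 0 < μ.real (G L) := by
    by_contra! h
    nlinarith [mul_nonpos_of_nonneg_of_nonpos hLq h]
  obtain ⟨N, hN, hNG, u, hu⟩ := hT.exists_iterate_preimage_cover_le_inv_two_pow (hG L) hpos r
  refine ⟨N, hN, fun i => (u i, L), fun i hi => ⟨hL, ?_⟩, ?_⟩
  · have hmN : ((m + i : ℕ) : ℝ) * μ.real (G L) ≤ L ^ q * μ.real (G L) := by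
      have : ((m + i : ℕ) : ℝ) ≤ m + N := by exact_mod_cast (by omega : m + i ≤ m + N)
      nlinarith [measureReal_le_one (μ := μ) (s := G L)]
    exact le_of_mul_le_mul_right hmN hpos
  · rw [← ofReal_measureReal, ← ENNReal.ofReal_ofNat 2, ← ENNReal.ofReal_inv_of_pos two_pos,
      ← ENNReal.ofReal_pow (by norm_num)]
    exact ENNReal.ofReal_le_ofReal hu

end Ergodic

section Growth

variable {X : Type*} [MeasurableSpace X] {μ : Measure X} [IsFiniteMeasure μ] {T : X → X}
  {f : X → ℝ}

theorem exists_measureReal_ge_geometric {θ s : ℝ} (hθ0 : 0 ≤ θ) (hθ1 : θ < 1) {B : Set X}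
    {D : ℕ → Set X} (hBD : B ⊆ ⋃ j, D j) (hB : s < μ.real B) :
    ∃ j, (1 - θ) * s * θ ^ j ≤ μ.real (D j) := by
  rcases lt_or_ge s 0 with hs | hs
  · exact ⟨0, by nlinarith [measureReal_nonneg (μ := μ) (s := D 0)]⟩
  by_contra! hsmall
  have hgeom : HasSum (fun j => (1 - θ) * s * θ ^ j) s := by
    have := (hasSum_geometric_of_lt_one hθ0 hθ1).mul_left ((1 - θ) * s)
    rwa [mul_right_comm, mul_inv_cancel₀ (sub_pos.2 hθ1).ne', one_mul] at this
  have : μ B ≤ ENNReal.ofReal s :=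
    calc μ B ≤ ∑' j, μ (D j) := (measure_mono hBD).trans (measure_iUnion_le D)
      _ ≤ ∑' j, ENNReal.ofReal ((1 - θ) * s * θ ^ j) := ENNReal.tsum_le_tsum fun j => by
          rw [← ofReal_measureReal]; exact ENNReal.ofReal_le_ofReal (hsmall j).le
      _ = ENNReal.ofReal s := by
          rw [← ENNReal.ofReal_tsum_of_nonneg (fun j => by have := sub_pos.2 hθ1; positivity)
            hgeom.summable, hgeom.tsum_eq]
  exact hB.not_ge (ENNReal.toReal_le_of_le_ofReal hs this)

theorem exists_measureReal_le_mul_measureReal_birkhoffSum_ge (hT : MeasurePreserving T μ μ)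
    (hfm : Measurable f) (hf : ∀ x, -1 ≤ f x) {η : ℝ} (hη0 : 0 < η) (hη1 : η ≤ 1) {R : ℝ}
    (hR : 12 ≤ η * R) :
    ∃ L : ℕ, 0 < L ∧ η * R / 12 ≤ L ∧
      μ.real {x | ∃ ℓ : ℕ, R ≤ ℓ ∧ ℓ < 2 * R ∧ η * ℓ < birkhoffSum T f ℓ x} ≤
        (⌊24 / η⌋₊ + 1) * μ.real {y | η / 2 * L ≤ birkhoffSum T f L y} := by
  set L := ⌊η * R / 6⌋₊
  have hLle : (L : ℝ) ≤ η * R / 6 := Nat.floor_le (by linarith)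
  have hLge : η * R / 12 ≤ L := by linarith [Nat.lt_floor_add_one (η * R / 6)]
  have hL : 0 < L := by exact_mod_cast (show (0 : ℝ) < L by linarith)
  set G := {y | η / 2 * L ≤ birkhoffSum T f L y}
  have hG : MeasurableSet G :=
    measurableSet_le measurable_const (hfm.birkhoffSum hT.measurable L)
  refine ⟨L, hL, hLge, ?_⟩
  have hcover : {x | ∃ ℓ : ℕ, R ≤ ℓ ∧ ℓ < 2 * R ∧ η * ℓ < birkhoffSum T f ℓ x} ⊆
      ⋃ k ∈ Finset.range (⌊24 / η⌋₊ + 1), T^[k * L] ⁻¹' G := by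
    rintro x ⟨ℓ, hRℓ, hℓR, hx⟩
    obtain ⟨k, hkℓ, hk⟩ := exists_birkhoffSum_block_ge hf hη1 hL (by nlinarith) hx
    have hkη : (k : ℝ) ≤ 24 / η := by
      rw [le_div_iff₀ hη0]
      have : (k : ℝ) * L ≤ ℓ := by exact_mod_cast hkℓ
      nlinarith
    simp only [Set.mem_iUnion, Finset.mem_range, exists_prop]
    exact ⟨k, Nat.lt_succ_of_le (Nat.le_floor hkη), hk⟩
  calc _ ≤ μ.real (⋃ k ∈ Finset.range (⌊24 / η⌋₊ + 1), T^[k * L] ⁻¹' G) :=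
        measureReal_mono hcover (measure_ne_top _ _)
    _ ≤ ∑ k ∈ Finset.range (⌊24 / η⌋₊ + 1), μ.real (T^[k * L] ⁻¹' G) :=
        measureReal_biUnion_finset_le _ _
    _ = (⌊24 / η⌋₊ + 1) * μ.real G := by
        simp [(hT.iterate _).measureReal_preimage hG.nullMeasurableSet]

theorem exists_const_mul_rpow_le_measureReal_birkhoffSum_ge (hT : MeasurePreserving T μ μ)
    (hfm : Measurable f) (hf : ∀ x, -1 ≤ f x) {p : ℝ} (hp : 1 < p) {η : ℝ} (hη0 : 0 < η)
    (hη1 : η ≤ 1) :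
    ∃ C > 0, ∀ (a m : ℝ) (B : Set X), 12 / η ^ 2 ≤ a → η * (a * m) < μ.real B →
      (∀ x ∈ B, ∃ ℓ : ℕ, η * a < ℓ ∧ η * ℓ < birkhoffSum T f ℓ x) →
      ∃ L : ℕ, 0 < L ∧
        C * (a ^ p * m) ≤ L ^ (p - 1) * μ.real {y | η / 2 * L ≤ birkhoffSum T f L y} := by
  set θ : ℝ := (2 ^ (p - 1))⁻¹
  have hθ0 : 0 < θ := by positivity
  have hθ1 : θ < 1 := inv_lt_one_of_one_lt₀ (Real.one_lt_rpow one_lt_two (by linarith))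
  set K : ℝ := ⌊24 / η⌋₊ + 1
  refine ⟨(η ^ 2 / 12) ^ (p - 1) * (1 - θ) * η / K, by
    have := sub_pos.2 hθ1; positivity, fun a m B ha hB hpts => ?_⟩
  have ha0 : 0 < a := lt_of_lt_of_le (by positivity) ha
  have hηa : 12 ≤ η ^ 2 * a := by rwa [div_le_iff₀' (by positivity)] at ha
  have hBD : B ⊆ ⋃ j : ℕ, {x | ∃ ℓ : ℕ, 2 ^ j * (η * a) ≤ ℓ ∧ ℓ < 2 * (2 ^ j * (η * a)) ∧
      η * ℓ < birkhoffSum T f ℓ x} := by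
    intro x hx
    obtain ⟨ℓ, hℓ, hxℓ⟩ := hpts x hx
    obtain ⟨j, hj⟩ := exists_two_pow_mul_le_lt (by positivity) hℓ.le
    exact Set.mem_iUnion.2 ⟨j, ℓ, hj.1, hj.2, hxℓ⟩
  obtain ⟨j, hj⟩ := exists_measureReal_ge_geometric hθ0.le hθ1 hBD hB
  have h2j : (1 : ℝ) ≤ 2 ^ j := one_le_pow₀ one_le_two
  obtain ⟨L, hL, hLge, hDL⟩ := exists_measureReal_le_mul_measureReal_birkhoffSum_ge hT hfm hf
    hη0 hη1 (R := 2 ^ j * (η * a)) (by nlinarith)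
  refine ⟨L, hL, ?_⟩
  set μG := μ.real {y | η / 2 * L ≤ birkhoffSum T f L y}
  have hμG : (1 - θ) * (η * (a * m)) * θ ^ j / K ≤ μG := by
    rw [div_le_iff₀ (by positivity)]; linarith
  have hLp : (2 ^ j * (η ^ 2 / 12 * a)) ^ (p - 1) ≤ (L : ℝ) ^ (p - 1) :=
    Real.rpow_le_rpow (by positivity) (by linarith) (by linarith)
  have hpow : (2 ^ j * (η ^ 2 / 12 * a)) ^ (p - 1) * θ ^ j * a =
      (η ^ 2 / 12) ^ (p - 1) * a ^ p := rpow_two_pow_mul_mul_inv_rpow_pow (by positivity) ha0 j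
  calc (η ^ 2 / 12) ^ (p - 1) * (1 - θ) * η / K * (a ^ p * m)
      = (2 ^ j * (η ^ 2 / 12 * a)) ^ (p - 1) * ((1 - θ) * (η * (a * m)) * θ ^ j / K) := by
        linear_combination (-((1 - θ) * η * m / K)) * hpow
    _ ≤ (2 ^ j * (η ^ 2 / 12 * a)) ^ (p - 1) * μG := by gcongr
    _ ≤ L ^ (p - 1) * μG := by gcongr

end Growth

theorem exists_seq_forall_and_ae_frequently_mem {X β : Type*} [MeasurableSpace X]
    {μ : Measure X} (Q : ℕ → β → Prop)
    (S : β → Set X) (hseg : ∀ r m : ℕ, ∃ N, 0 < N ∧ ∃ w : ℕ → β, (∀ i < N, Q (m + i) (w i)) ∧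
      μ (⋃ i ∈ Finset.range N, S (w i))ᶜ ≤ 2⁻¹ ^ r) :
    ∃ s : ℕ → β, (∀ n, Q n (s n)) ∧ ∀ᵐ x ∂μ, ∃ᶠ n in atTop, x ∈ S (s n) := by
  choose N hN w hwQ hwμ using hseg
  -- segment `r` occupies the indices `[start r, start (r + 1))`
  let start : ℕ → ℕ := fun r => Nat.rec 0 (fun r m => m + N r m) r
  have hstart (r : ℕ) : start (r + 1) = start r + N r (start r) := rfl
  have hmono : StrictMono start := strictMono_nat_of_lt_succ fun r => by
    rw [hstart]; exact Nat.lt_add_of_pos_right (hN _ _)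
  have hex (n : ℕ) : ∃ r, n < start (r + 1) := ⟨n, hmono.id_le (n + 1)⟩
  let seg (n : ℕ) : ℕ := Nat.find (hex n)
  have hseg_le (n : ℕ) : start (seg n) ≤ n := by
    rcases h : seg n with _ | k
    · exact Nat.zero_le n
    · exact not_lt.1 (Nat.find_min (hex n) (show k < seg n by omega))
  have hseg_eq (r i : ℕ) (hi : i < N r (start r)) : seg (start r + i) = r := by
    refine (Nat.find_eq_iff _).2 ⟨by rw [hstart]; omega, fun r' hr' => ?_⟩
    exact not_lt.2 ((hmono.monotone (Nat.succ_le_of_lt hr')).trans (Nat.le_add_right _ _))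
  refine ⟨fun n => w (seg n) (start (seg n)) (n - start (seg n)), fun n => ?_, ?_⟩
  · have hlt : n - start (seg n) < N (seg n) (start (seg n)) := by
      have hn : n < start (seg n + 1) := Nat.find_spec (hex n)
      rw [hstart] at hn
      have := hseg_le n
      omega
    simpa [Nat.add_sub_cancel' (hseg_le n)] using hwQ _ _ _ hlt
  · have hsum : ∑' r, μ (⋃ i ∈ Finset.range (N r (start r)), S (w r (start r) i))ᶜ ≠ ⊤ :=
      ne_top_of_le_ne_top (by simp [ENNReal.tsum_geometric])
        (ENNReal.tsum_le_tsum fun r => hwμ r (start r))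
    filter_upwards [ae_eventually_notMem hsum] with x hx
    refine frequently_atTop.2 fun n₀ => ?_
    obtain ⟨r, hxr, hr⟩ := (hx.and (eventually_ge_atTop n₀)).exists
    obtain ⟨i, hi, hxi⟩ : ∃ i < N r (start r), x ∈ S (w r (start r) i) := by simpa using hxr
    refine ⟨start r + i, hr.trans ((hmono.id_le r).trans (Nat.le_add_right _ _)), ?_⟩
    simpa [hseg_eq r i hi] using hxi

theorem measurable_of_eq_on_pieces {X Y : Type*} [MeasurableSpace X] [MeasurableSpace Y]
    {f : X → Y} {a : ℕ → Y}
    {A : ℕ → Set X} {B : Set X} {b c : Y} (hA : ∀ n, MeasurableSet (A n)) (hB : MeasurableSet B)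
    (hfA : ∀ n, ∀ x ∈ A n, f x = a n) (hfB : ∀ x ∈ B, f x = b)
    (hfc : ∀ x, x ∉ B → x ∉ ⋃ n, A n → f x = c) : Measurable f := by
  intro S _
  have hpiece {P : Set X} {y : Y} (hP : MeasurableSet P) (h : ∀ x ∈ P, f x = y) :
      MeasurableSet (f ⁻¹' S ∩ P) := by
    rw [show f ⁻¹' S ∩ P = {_x | y ∈ S} ∩ P from
      Set.ext fun x => and_congr_left fun hx => by simp [h x hx]]
    exact (MeasurableSet.const _).inter hP
  rw [← Set.inter_union_compl (f ⁻¹' S) (B ∪ ⋃ n, A n), Set.inter_union_distrib_left,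
    Set.inter_iUnion]
  refine ((hpiece hB hfB).union (.iUnion fun n => hpiece (hA n) (hfA n))).union
    (hpiece (y := c) (hB.union (.iUnion hA)).compl fun x hx => ?_)
  rw [Set.compl_union] at hx
  exact hfc x hx.1 hx.2

theorem le_of_eq_on_pieces {X Y : Type*} [Preorder Y] {f : X → Y} {a : ℕ → Y} {A : ℕ → Set X}
    {B : Set X} {b c d : Y} (hfA : ∀ n, ∀ x ∈ A n, f x = a n) (hfB : ∀ x ∈ B, f x = b)
    (hfc : ∀ x, x ∉ B → x ∉ ⋃ n, A n → f x = c) (hda : ∀ n, d ≤ a n) (hdb : d ≤ b)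
    (hdc : d ≤ c) (x : X) : d ≤ f x := by
  by_cases hxB : x ∈ B
  · exact (hfB x hxB).symm ▸ hdb
  by_cases hxA : x ∈ ⋃ n, A n
  · obtain ⟨n, hn⟩ := Set.mem_iUnion.1 hxA
    exact (hfA n x hn).symm ▸ hda n
  · exact (hfc x hxB hxA).symm ▸ hdc

theorem stmt16_general
    {X : Type*} [MeasurableSpace X]
    (μ : Measure X) [IsProbabilityMeasure μ]
    (T : Equiv.Perm X)
    (hTerg : Ergodic (⇑T) μ)
    (p : ℝ) (hp : 1 < p)
    -- the data defining a function `f` of class `F_p`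
    (a : ℕ → ℝ) (A : ℕ → Set X) (B : Set X) (f : X → ℝ)
    (ha2 : ∀ n, 2 < a n)
    (hAmeas : ∀ n, MeasurableSet (A n))
    (hBmeas : MeasurableSet B)
    (hfA : ∀ n, ∀ x ∈ A n, f x = a n)
    (hfB : ∀ x ∈ B, f x = -1)
    (hfzero : ∀ x, x ∉ B → x ∉ ⋃ n, A n → f x = 0)
    (hFp : Tendsto (fun n : ℕ => a n ^ p * (μ (A n)).toReal) atTop atTop)
    -- the hypothesis of the lemma
    (η : ℝ) (hη0 : 0 < η) (hη1 : η < 1)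
    (hBn : ∀ n : ℕ, ∃ Bn : Set X, MeasurableSet Bn ∧
      η * (a n * (μ (A n)).toReal) < (μ Bn).toReal ∧
      ∀ x ∈ Bn, ∃ ℓ : ℕ, η * a n < (ℓ : ℝ) ∧
        η * (ℓ : ℝ) < ∑ i ∈ Finset.range ℓ, f ((T ^ i) x)) :
    ∃ (v : ℕ → ℤ) (L : ℕ → ℕ), (∀ n, 0 < L n) ∧
      (∀ n : ℕ, (n : ℝ) ^ (1 / (p - 1)) ≤ (L n : ℝ)) ∧
      ∀ᵐ x ∂μ, ∃ c : ℝ, 0 < c ∧ ∃ᶠ n in atTop,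
        c ≤ ((L n : ℝ))⁻¹ * ∑ i ∈ Finset.range (L n), f ((T ^ (v n + 1 + (i : ℤ))) x) := by
  have hmp := hTerg.toMeasurePreserving
  have hfm : Measurable f := measurable_of_eq_on_pieces hAmeas hBmeas hfA hfB hfzero
  have hf1 : ∀ x, -1 ≤ f x :=
    le_of_eq_on_pieces hfA hfB hfzero (fun n => by linarith [ha2 n]) le_rfl (by norm_num)
  have ha : Tendsto a atTop atTop := tendsto_atTop_of_tendsto_rpow_mul_atTop (by linarith)
    (fun n => by linarith [ha2 n]) (fun n => measureReal_le_one) hFp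
  obtain ⟨C, hC, hgrowth⟩ :=
    exists_const_mul_rpow_le_measureReal_birkhoffSum_ge hmp hfm hf1 hp hη0 hη1.le
  have hlarge (M : ℝ) : ∃ L : ℕ, 0 < L ∧
      M ≤ L ^ (p - 1) * μ.real {y | η / 2 * L ≤ birkhoffSum T f L y} := by
    obtain ⟨n, hn, hnM⟩ := ((ha.eventually_ge_atTop (12 / η ^ 2)).and
      ((hFp.const_mul_atTop hC).eventually_ge_atTop M)).exists
    obtain ⟨Bn, -, hμBn, hBn_pts⟩ := hBn n
    obtain ⟨L, hL, hLM⟩ := hgrowth (a n) _ Bn hn hμBn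
      (by simpa [birkhoffSum, Equiv.Perm.coe_pow] using hBn_pts)
    exact ⟨L, hL, hnM.trans hLM⟩
  have hcover := hTerg.exists_shifts_lengths_cover
    (fun L => measurableSet_le measurable_const (hfm.birkhoffSum hmp.measurable L)) hlarge
  obtain ⟨s, hsQ, hs⟩ := exists_seq_forall_and_ae_frequently_mem
    (fun n (w : ℕ × ℕ) => 0 < w.2 ∧ (n : ℝ) ≤ w.2 ^ (p - 1))
    (fun w : ℕ × ℕ => (⇑T)^[w.1] ⁻¹' {y | η / 2 * w.2 ≤ birkhoffSum T f w.2 y}) hcover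
  -- the window of `M(v, L)` starts at `T^(v + 1) x`
  refine ⟨fun n => ((s n).1 : ℤ) - 1, fun n => (s n).2, fun n => (hsQ n).1, fun n => ?_, ?_⟩
  · rw [one_div, Real.rpow_inv_le_iff_of_pos (Nat.cast_nonneg _) (Nat.cast_nonneg _)
      (by linarith)]
    exact (hsQ n).2
  · filter_upwards [hs] with x hx
    refine ⟨η / 2, by positivity, hx.mono fun n hn => ?_⟩
    rw [Equiv.Perm.sum_range_zpow_add_eq_birkhoffSum, sub_add_cancel, zpow_natCast,
      Equiv.Perm.coe_pow, le_inv_mul_iff₀ (by exact_mod_cast (hsQ n).1), mul_comm]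
    exact hn

/-- Main lemma for bad moving averages of functions in the class `F_p`: if `f ∈ F_p`
(given by data `(a_n, A_n, B)`) and there is `0 < η < 1` such that for every `n` there is
a set `B_n` with `μ(B_n) > η a_n μ(A_n)` on which ergodic sums of length some
`ℓ_x > η a_n` exceed `η ℓ_x`, then there is a moving average `(v_n, L_n)` with
`L_n ≥ n^{1/(p-1)}` whose averages of `f` have strictly positive limsup almost
everywhere. -/
theorem stmt16
    {X : Type*} [MeasurableSpace X] [StandardBorelSpace X]
    (μ : Measure X) [IsProbabilityMeasure μ] [NullSingletonClass μ]
    (T : Equiv.Perm X) (hT : Measurable (⇑T)) (hT' : Measurable (⇑T.symm))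
    (hTerg : Ergodic (⇑T) μ)
    (p : ℝ) (hp : 1 < p)
    -- the data defining a function `f` of class `F_p`
    (a : ℕ → ℝ) (A : ℕ → Set X) (B : Set X) (f : X → ℝ)
    (ha2 : ∀ n, 2 < a n)
    (hasuper : ∀ d : ℝ, 0 < d → Tendsto (fun n : ℕ => a n / (n : ℝ) ^ d) atTop atTop)
    (hAmeas : ∀ n, MeasurableSet (A n))
    (hApos : ∀ n, 0 < μ (A n))
    (hAdisj : Pairwise (fun m n => Disjoint (A m) (A n)))
    (hasummable : Summable (fun n : ℕ => a n * (μ (A n)).toReal))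
    (hhalf : (∑' n : ℕ, a n * (μ (A n)).toReal) ≤ 1 / 2)
    (hBmeas : MeasurableSet B)
    (hBdisj : Disjoint B (⋃ n, A n))
    (hBmass : (μ B).toReal = ∑' n : ℕ, a n * (μ (A n)).toReal)
    (hfA : ∀ n, ∀ x ∈ A n, f x = a n)
    (hfB : ∀ x ∈ B, f x = -1)
    (hfzero : ∀ x, x ∉ B → x ∉ ⋃ n, A n → f x = 0)
    (hFp : Tendsto (fun n : ℕ => a n ^ p * (μ (A n)).toReal) atTop atTop)
    -- the hypothesis of the lemma
    (η : ℝ) (hη0 : 0 < η) (hη1 : η < 1)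
    (hBn : ∀ n : ℕ, ∃ Bn : Set X, MeasurableSet Bn ∧
      η * (a n * (μ (A n)).toReal) < (μ Bn).toReal ∧
      ∀ x ∈ Bn, ∃ ℓ : ℕ, η * a n < (ℓ : ℝ) ∧
        η * (ℓ : ℝ) < ∑ i ∈ Finset.range ℓ, f ((T ^ i) x)) :
    ∃ (v : ℕ → ℤ) (L : ℕ → ℕ), (∀ n, 0 < L n) ∧
      (∀ n : ℕ, (n : ℝ) ^ (1 / (p - 1)) ≤ (L n : ℝ)) ∧
      ∀ᵐ x ∂μ, ∃ c : ℝ, 0 < c ∧ ∃ᶠ n in atTop,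
        c ≤ ((L n : ℝ))⁻¹ * ∑ i ∈ Finset.range (L n), f ((T ^ (v n + 1 + (i : ℤ))) x) :=
  stmt16_general μ T hTerg p hp a A B f ha2 hAmeas hBmeas hfA hfB hfzero hFp η hη0 hη1 hBn
end
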